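/- arXiv:0804.1380 — 4 statements merged into one kernel-verified Lean document; each statement's English description precedes it below -/
import Mathlib

section
/- Sending an ℓ-core partition λ to its transpose corresponds, under the root-lattice bijection π, to the map (a₁, ..., a_ℓ) ↦ (−a_ℓ, ..., −a₁); that is, π^{-1}(λ^tr) is the coordinate-reversal-and-negation of π^{-1}(λ). -/
/-- A partition: a weakly decreasing list of positive integers. -/
def IsPartition (l : List ℕ) : Prop := l.Pairwise (· ≥ ·) ∧ ∀ x ∈ l, 0 < x

/-- Hook length of the box in (0-based) row `a` and (1-based) column `c`. -/
def hook (l : List ℕ) (a c : ℕ) : ℕ :=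
  (l.getD a 0 - c) + ((List.range l.length).filter (fun i => decide (a < i ∧ c ≤ l.getD i 0))).length + 1

/-- `l` is an `ℓ`-core: no box has hook length divisible by `ℓ`. -/
def IsCore (ℓ : ℕ) (l : List ℕ) : Prop :=
  ∀ a < l.length, ∀ c, 1 ≤ c → c ≤ l.getD a 0 → ¬ (ℓ ∣ hook l a c)

/-- First-column hook lengths of `l` (the beta-numbers). -/
def betaList (l : List ℕ) : List ℕ := (List.range l.length).map (fun a => hook l a 1)

/-- Bead positions of the flush abacus with ℓ runners whose largest bead level on
runner i is `a i`. -/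
def Beads (ℓ : ℕ) (a : Fin ℓ → ℤ) : Set ℤ :=
  {x | ∃ i : Fin ℓ, ∃ r : ℤ, r ≤ a i ∧ x = r * ℓ + (i : ℤ)}

/-- The (doubly infinite) beta-number set of a partition: its first-column hook
lengths together with all negative integers. -/
def BetaSet (l : List ℕ) : Set ℤ :=
  {x | (∃ a < l.length, x = (hook l a 1 : ℤ)) ∨ x < 0}

/-- The abacus determined by `a` represents the partition `l`
(up to the normalizing shift `s`). -/
def Corresponds (ℓ : ℕ) (a : Fin ℓ → ℤ) (l : List ℕ) : Prop :=
  ∃ s : ℤ, Beads ℓ a = (fun x => x + s) '' BetaSet l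

/-- The transpose (conjugate) of a partition. -/
def transposeL (l : List ℕ) : List ℕ :=
  (List.range (l.headD 0)).map (fun j => (l.filter (fun x => decide (j < x))).length)

/-!
Let `λ` have `n` parts and largest part `m`. The first-column hook lengths of `λ` and the
numbers `n + m - 1 - h`, for `h` a first-column hook length of `λᵗʳ`, split `{0, …, n + m - 1}`
(they are disjoint, strictly monotone in the index, and there are `n + m` of them). Hence the
beta-set of `λᵗʳ` is the complement of that of `λ` reflected in a point, and the same holds for
the abaci: `x` is a bead of `b` iff `t - x` is not a bead of `a`. Reading this off runner by
runner gives `b i = ⌊(t - i) / ℓ⌋ - a σ(i) - 1` with `σ(i) = (t - i) mod ℓ` a permutation;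
summing over the runners with `∑ a = ∑ b = 0` forces `t = 2ℓ - 1`, where `σ(i) = ℓ - 1 - i`
and `⌊(t - i) / ℓ⌋ = 1`.
-/

lemma length_filter_range_lt (n a : ℕ) :
    ((List.range n).filter (fun i => decide (a < i))).length = n - 1 - a := by
  induction n with
  | zero => simp
  | succ n ih =>
    rw [List.range_succ, List.filter_append, List.length_append, ih]
    by_cases h : a < n <;> simp [h] <;> omega

section Antitone

variable {l : List ℕ} (hs : l.Pairwise (· ≥ ·))
include hs

lemma getD_le_getD_of_pairwise {i j : ℕ} (hij : i ≤ j) (hj : j < l.length) :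
    l.getD j 0 ≤ l.getD i 0 := by
  rcases hij.eq_or_lt with rfl | hlt
  · rfl
  rw [List.getD_eq_getElem l 0 (hlt.trans hj), List.getD_eq_getElem l 0 hj]
  exact List.pairwise_iff_getElem.mp hs i j _ hj hlt

lemma getD_le_headD_of_pairwise {i : ℕ} (hi : i < l.length) : l.getD i 0 ≤ l.headD 0 := by
  cases l with
  | nil => simp at hi
  | cons x xs => exact getD_le_getD_of_pairwise hs (Nat.zero_le i) hi

lemma lt_countP_lt_iff (j : ℕ) {a : ℕ} (ha : a < l.length) :
    a < l.countP (fun x => j < x) ↔ j < l.getD a 0 := by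
  induction l generalizing a with
  | nil => simp at ha
  | cons x l ih =>
    obtain ⟨hx, hl⟩ := List.pairwise_cons.mp hs
    simp only [List.length_cons] at ha
    by_cases hjx : j < x
    · rcases a with _ | a
      · simp [hjx]
      · simpa [hjx] using ih hl (a := a) (by omega)
    · have hzero : l.countP (fun y => j < y) = 0 :=
        List.countP_eq_zero.mpr fun y hy => by simpa using (hx y hy).trans (not_lt.mp hjx)
      have hja : ¬ j < (x :: l).getD a 0 := by
        have := getD_le_getD_of_pairwise hs (Nat.zero_le a) (by simpa using ha)
        simp only [List.getD_cons_zero] at this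
        omega
      rw [iff_false_intro hja]
      simp [hjx, hzero]

end Antitone

namespace IsPartition

variable {l : List ℕ}

lemma getD_pos (hp : IsPartition l) {i : ℕ} (hi : i < l.length) : 0 < l.getD i 0 := by
  rw [List.getD_eq_getElem l 0 hi]
  exact hp.2 _ (List.getElem_mem hi)

lemma hook_one (hp : IsPartition l) {a : ℕ} (ha : a < l.length) :
    hook l a 1 = l.getD a 0 + (l.length - 1 - a) := by
  have hpos : (List.range l.length).filter (fun i => decide (a < i ∧ 1 ≤ l.getD i 0))
      = (List.range l.length).filter (fun i => decide (a < i)) := by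
    refine List.filter_congr fun i hi => ?_
    have := hp.getD_pos (List.mem_range.mp hi)
    simp only [decide_eq_decide]
    omega
  rw [hook, hpos, length_filter_range_lt]
  have := hp.getD_pos ha
  omega

end IsPartition

lemma transposeL_length (l : List ℕ) : (transposeL l).length = l.headD 0 := by
  simp [transposeL]

lemma transposeL_getD (l : List ℕ) {j : ℕ} (hj : j < l.headD 0) :
    (transposeL l).getD j 0 = l.countP (fun x => j < x) := by
  rw [List.getD_eq_getElem _ 0 (by rwa [transposeL_length])]
  simp [transposeL, List.countP_eq_length_filter]

lemma countP_lt_mono (l : List ℕ) {j j' : ℕ} (h : j ≤ j') :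
    l.countP (fun x => j' < x) ≤ l.countP (fun x => j < x) :=
  List.countP_mono_left fun x _ hx => by simp only [decide_eq_true_eq] at hx ⊢; omega

lemma IsPartition.transpose {l : List ℕ} (hp : IsPartition l) : IsPartition (transposeL l) := by
  refine ⟨List.pairwise_iff_getElem.mpr fun i j hi hj hij => ?_, fun x hx => ?_⟩
  · simpa [_root_.transposeL, List.countP_eq_length_filter] using countP_lt_mono l hij.le
  · obtain ⟨j, hj, rfl⟩ := List.mem_map.mp hx
    cases l with
    | nil => simp at hj
    | cons y ys =>
      simp only [List.mem_range, List.headD_cons] at hj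
      exact List.length_pos_iff.mpr fun h => by simpa [hj] using List.filter_eq_nil_iff.mp h y (by simp)

section Conjugate

open Finset

variable {n m : ℕ} {lam mu : ℕ → ℕ} (hdual : ∀ a < n, ∀ j, a < mu j ↔ j < lam a)
include hdual

lemma strictAntiOn_add_sub_of_dual :
    StrictAntiOn (fun a => (lam a : ℤ) + (n - 1 - a)) (Set.Iio n) := by
  intro a _ a' ha' haa'
  have : lam a' ≤ lam a := by
    by_contra! h
    have := (hdual a' ha' (lam a)).mpr h
    exact (lt_irrefl _) ((hdual a (haa'.trans ha') (lam a)).mp (by omega))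
  simp only
  omega

variable (hmu : ∀ j, mu j ≤ n)
include hmu

lemma strictMono_sub_add_of_dual : StrictMono (fun j => (n : ℤ) - mu j + j) := by
  intro j j' hjj'
  have : mu j' ≤ mu j := by
    by_contra! h
    have := (hdual (mu j) (h.trans_le (hmu j')) j').mp h
    exact (lt_irrefl _) ((hdual (mu j) (h.trans_le (hmu j')) j).mpr (by omega))
  simp only
  omega

lemma disjoint_image_dual :
    Disjoint ((range n).image fun a => (lam a : ℤ) + (n - 1 - a))
      ((range m).image fun j => (n : ℤ) - mu j + j) := by
  simp only [disjoint_left, mem_image, mem_range, not_exists, not_and]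
  rintro _ ⟨a, ha, rfl⟩ j _ h
  have := hmu j
  by_cases hj : j < lam a
  · have := (hdual a ha j).mpr hj; omega
  · have := mt (hdual a ha j).mp hj; omega

lemma union_image_dual (hlam : ∀ a < n, lam a ≤ m) :
    (range n).image (fun a => (lam a : ℤ) + (n - 1 - a)) ∪
      (range m).image (fun j => (n : ℤ) - mu j + j) = Ico 0 (n + m : ℤ) := by
  apply eq_of_subset_of_card_le
  · simp only [union_subset_iff, image_subset_iff, mem_range, mem_Ico]
    refine ⟨fun a ha => ?_, fun j _ => ?_⟩
    · have := hlam a ha; omega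
    · have := hmu j; omega
  · rw [card_union_of_disjoint (disjoint_image_dual hdual hmu),
      card_image_of_injOn ((strictAntiOn_add_sub_of_dual hdual).injOn.mono (by simp)),
      card_image_of_injective _ (strictMono_sub_add_of_dual hdual hmu).injective,
      Int.card_Ico]
    simp

end Conjugate

namespace IsPartition

variable {l : List ℕ}

lemma mem_betaSet_iff (hp : IsPartition l) (z : ℤ) :
    z ∈ BetaSet l ↔
      z < 0 ∨ z ∈ (Finset.range l.length).image fun a => (l.getD a 0 : ℤ) + (l.length - 1 - a) := by
  simp only [BetaSet, Set.mem_ofPred_eq, Finset.mem_image, Finset.mem_range, or_comm (b := z < 0)]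
  refine or_congr_right (exists_congr fun a => and_congr_right fun ha => ?_)
  rw [hp.hook_one ha]
  omega

lemma mem_betaSet_transposeL_iff (hp : IsPartition l) (z : ℤ) :
    z ∈ BetaSet (transposeL l) ↔ (l.length + l.headD 0 - 1 - z : ℤ) ∉ BetaSet l := by
  rw [hp.transpose.mem_betaSet_iff, transposeL_length, hp.mem_betaSet_iff]
  set n := l.length
  set m := l.headD 0
  have hmu : ∀ j, l.countP (fun x => j < x) ≤ n := fun j => List.countP_le_length
  have hdual : ∀ a < n, ∀ j, a < l.countP (fun x => j < x) ↔ j < l.getD a 0 :=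
    fun a ha j => lt_countP_lt_iff hp.1 j ha
  have hU := union_image_dual (m := m) hdual hmu fun a ha => getD_le_headD_of_pairwise hp.1 ha
  have hD := disjoint_image_dual (m := m) hdual hmu
  set w : ℤ := n + m - 1 - z
  have hT : z ∈ (Finset.range m).image (fun j => ((transposeL l).getD j 0 : ℤ) + (m - 1 - j)) ↔
      w ∈ (Finset.range m).image fun j => (n : ℤ) - l.countP (fun x => j < x) + j := by
    simp only [Finset.mem_image, Finset.mem_range]
    refine exists_congr fun j => and_congr_right fun hj => ?_
    rw [transposeL_getD l hj]
    omega
  have hcover := Finset.ext_iff.mp hU w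
  have hdisj := fun h : w ∈ _ => Finset.disjoint_left.mp hD h
  simp only [Finset.mem_union, Finset.mem_Ico] at hcover
  rw [hT]
  by_cases hz : z < 0
  · have : ¬ (0 ≤ w ∧ w < n + m) := by omega
    have : ¬ w < 0 := by omega
    tauto
  · have : w < 0 ↔ ¬ (0 ≤ w ∧ w < n + m) := by omega
    tauto

end IsPartition

section Abacus

variable {ℓ : ℕ}

lemma Fin.mul_add_ediv (r : ℤ) (i : Fin ℓ) : (r * ℓ + i) / ℓ = r := by
  have : (ℓ : ℤ) ≠ 0 := by have := i.pos; omega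
  rw [add_comm, Int.add_mul_ediv_right _ _ this, Int.ediv_eq_zero_of_lt (by omega) (by omega)]
  simp

lemma Fin.mul_add_emod (r : ℤ) (i : Fin ℓ) : (r * ℓ + i) % ℓ = i := by
  rw [add_comm, Int.add_mul_emod_self_right, Int.emod_eq_of_lt (by omega) (by omega)]

lemma mul_add_mem_beads_iff (c : Fin ℓ → ℤ) (r : ℤ) (i : Fin ℓ) :
    r * ℓ + i ∈ Beads ℓ c ↔ r ≤ c i := by
  refine ⟨fun ⟨i', r', hr', he⟩ => ?_, fun h => ⟨i, r, h, rfl⟩⟩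
  obtain rfl : r = r' := by simpa only [Fin.mul_add_ediv] using congrArg (· / (ℓ : ℤ)) he
  obtain rfl : i = i' := by
    have := congrArg (· % (ℓ : ℤ)) he
    simp only [Fin.mul_add_emod] at this
    exact Fin.ext (by exact_mod_cast this)
  exact hr'

def reflectRunner (t : ℤ) (i : Fin ℓ) : Fin ℓ :=
  ⟨((t - i) % ℓ).toNat, by
    have hℓ : (0 : ℤ) < ℓ := by exact_mod_cast i.pos
    have := Int.emod_nonneg (t - i) hℓ.ne'
    have := Int.emod_lt_of_pos (t - i) hℓ
    omega⟩

lemma reflectRunner_val (t : ℤ) (i : Fin ℓ) : (reflectRunner t i : ℤ) = (t - i) % ℓ :=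
  Int.toNat_of_nonneg (Int.emod_nonneg _ (by have := i.pos; omega))

lemma sub_eq_mul_add_reflectRunner (t : ℤ) (i : Fin ℓ) :
    t - i = (t - i) / ℓ * ℓ + reflectRunner t i := by
  rw [reflectRunner_val, mul_comm, Int.mul_ediv_add_emod]

lemma reflectRunner_bijective (t : ℤ) : Function.Bijective (reflectRunner (ℓ := ℓ) t) := by
  refine Finite.injective_iff_bijective.mp fun i i' h => ?_
  have := congrArg (fun k : Fin ℓ => (k : ℤ)) h
  simp only [reflectRunner_val] at this
  have hmod : (i : ℤ) ≡ i' [ZMOD ℓ] := by simpa using (Int.ModEq.refl t).sub this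
  rw [Int.ModEq, Int.emod_eq_of_lt (by omega) (by omega),
    Int.emod_eq_of_lt (by omega) (by omega)] at hmod
  exact Fin.ext (by exact_mod_cast hmod)

lemma apply_eq_of_mem_beads_iff_not_mem {a b : Fin ℓ → ℤ} {t : ℤ}
    (h : ∀ x, x ∈ Beads ℓ b ↔ t - x ∉ Beads ℓ a) (i : Fin ℓ) :
    b i = (t - i) / ℓ - a (reflectRunner t i) - 1 := by
  refine eq_of_forall_le_iff fun r => ?_
  rw [← mul_add_mem_beads_iff, h, show t - (r * ℓ + i) = ((t - i) / ℓ - r) * ℓ + reflectRunner t i by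
    linear_combination sub_eq_mul_add_reflectRunner t i, mul_add_mem_beads_iff]
  omega

lemma two_mul_sum_fin_val (ℓ : ℕ) : 2 * ∑ i : Fin ℓ, (i : ℤ) = ℓ * (ℓ - 1) := by
  have := Finset.sum_range_id_mul_two ℓ
  rw [Fin.sum_univ_eq_sum_range (fun i => (i : ℤ)), ← Nat.cast_sum]
  rcases ℓ with _ | ℓ
  · simp
  · push_cast [Nat.add_sub_cancel] at this ⊢
    linarith

variable {a b : Fin ℓ → ℤ} {t : ℤ} (h : ∀ x, x ∈ Beads ℓ b ↔ t - x ∉ Beads ℓ a)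
include h

lemma eq_two_mul_sub_one_of_mem_beads_iff_not_mem (hℓ : 0 < ℓ) (ha : ∑ i, a i = 0)
    (hb : ∑ i, b i = 0) : t = 2 * ℓ - 1 := by
  have hσ := reflectRunner_bijective (ℓ := ℓ) t
  have hq : ∑ i : Fin ℓ, (t - i) / ℓ = ℓ := by
    have := Fintype.sum_congr _ _ (apply_eq_of_mem_beads_iff_not_mem h)
    simp only [Finset.sum_sub_distrib, hσ.sum_comp a, ha, hb, Finset.sum_const,
      Finset.card_univ, Fintype.card_fin, nsmul_eq_mul, mul_one] at this
    linarith
  have hsum := Fintype.sum_congr _ _ (sub_eq_mul_add_reflectRunner (ℓ := ℓ) t)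
  simp only [Finset.sum_sub_distrib, Finset.sum_add_distrib, ← Finset.sum_mul, hq,
    hσ.sum_comp (fun k => (k : ℤ)), Finset.sum_const, Finset.card_univ, Fintype.card_fin,
    nsmul_eq_mul] at hsum
  have := two_mul_sum_fin_val ℓ
  have hℓ' : (ℓ : ℤ) ≠ 0 := by omega
  exact mul_left_cancel₀ hℓ' (by linear_combination hsum + this)

lemma apply_eq_neg_apply_rev_of_mem_beads_iff_not_mem (ha : ∑ i, a i = 0) (hb : ∑ i, b i = 0)
    (j : Fin ℓ) : b j = -a j.rev := by
  have ht := eq_two_mul_sub_one_of_mem_beads_iff_not_mem h j.pos ha hb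
  have hrepr : t - j = 1 * ℓ + (j.rev : ℤ) := by
    rw [ht, Fin.val_rev]
    omega
  have hσ : reflectRunner t j = j.rev := by
    have := reflectRunner_val t j
    rw [hrepr, Fin.mul_add_emod] at this
    exact Fin.ext (by exact_mod_cast this)
  rw [apply_eq_of_mem_beads_iff_not_mem h j, hσ, hrepr, Fin.mul_add_ediv]
  ring

end Abacus

lemma mem_beads_iff_of_eq_image {ℓ : ℕ} {c : Fin ℓ → ℤ} {l : List ℕ} {s : ℤ}
    (h : Beads ℓ c = (fun x => x + s) '' BetaSet l) (x : ℤ) :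
    x ∈ Beads ℓ c ↔ x - s ∈ BetaSet l := by
  simp [h, sub_eq_add_neg]

lemma exists_mem_beads_iff_not_mem_of_corresponds {ℓ : ℕ} {l : List ℕ} (hp : IsPartition l)
    {a b : Fin ℓ → ℤ} (ha : Corresponds ℓ a l) (hb : Corresponds ℓ b (transposeL l)) :
    ∃ t, ∀ x, x ∈ Beads ℓ b ↔ t - x ∉ Beads ℓ a := by
  obtain ⟨s, hs⟩ := ha
  obtain ⟨s', hs'⟩ := hb
  refine ⟨l.length + l.headD 0 - 1 + s + s', fun x => ?_⟩
  rw [mem_beads_iff_of_eq_image hs', hp.mem_betaSet_transposeL_iff, mem_beads_iff_of_eq_image hs]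
  ring_nf

/-- Under π, transposing an ℓ-core corresponds to reversing and negating the
root-lattice coordinates: π⁻¹(λᵗʳ) = (-a_ℓ, ..., -a₁). -/
theorem stmt15 (ℓ : ℕ)
    (l : List ℕ) (hp : IsPartition l)
    (a : Fin ℓ → ℤ) (ha : ∑ i, a i = 0) (hcor : Corresponds ℓ a l)
    (b : Fin ℓ → ℤ) (hb : ∑ i, b i = 0) (hbcor : Corresponds ℓ b (transposeL l)) :
    ∀ j : Fin ℓ, b j = - a ⟨ℓ - 1 - (j : ℕ), by have := j.isLt; omega⟩ := by
  obtain ⟨t, ht⟩ := exists_mem_beads_iff_not_mem_of_corresponds hp hcor hbcor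
  intro j
  rw [apply_eq_neg_apply_rev_of_mem_beads_iff_not_mem ht ha hb j]
  congr 2
  ext
  simp only [Fin.val_rev]
  omega
end

section
/- Let λ be an ℓ-core of length k and let Φ̃ be the column analogue of the Berg–Vazirani bijection (deleting all columns whose first-row hook length is congruent to h_{(1,1)} mod ℓ). Then in each row of λ, exactly one box of hook length < ℓ (i.e., one skew box) is deleted by Φ̃. -/
/-- The column analogue Φ̃ of the Berg–Vazirani bijection: delete every column
whose first-row hook length is congruent to h_{(1,1)} mod ℓ (columns are
1-based: column c+1 has top-box hook `hook l 0 (c+1)`), dropping empty rows. -/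
def tilde (ℓ : ℕ) (l : List ℕ) : List ℕ :=
  (l.map (fun p =>
    ((List.range p).filter
      (fun c => decide (¬ hook l 0 (c + 1) % ℓ = hook l 0 1 % ℓ))).length)).filter
    (fun x => decide (0 < x))

/-!
Write `h(a, c)` for `hook l a c`. For a box in row `a`, `h(a, c) + h(0, 1) = h(0, c) + h(a, 1)`,
so the deleted boxes of row `a` are those with `h(a, c) ≡ h(a, 1) [MOD ℓ]`, and the skew ones
among them are those with `h(a, c) = r := h(a, 1) % ℓ`. Hook lengths strictly decrease along a
row, so there is at most one. The hook lengths of row `a` are exactly the numbers in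
`[1, h(a, 1)]` other than the differences `h(a, 1) - h(i, 1)` with `i > a`; as `l` is a core,
`r ≠ 0` and `h(a, 1) - r` is a multiple of `ℓ` that is not a first-column hook, so `r` occurs.
-/

namespace ListPartition

def leg (l : List ℕ) (a c : ℕ) : ℕ :=
  ((List.range l.length).filter (fun i => decide (a < i ∧ c ≤ l.getD i 0))).length

lemma hook_eq_arm_add_leg (l : List ℕ) (a c : ℕ) :
    hook l a c = (l.getD a 0 - c) + leg l a c + 1 := rfl

lemma leg_eq_card (l : List ℕ) (a c : ℕ) :
    leg l a c = ((Finset.range l.length).filter (fun i => a < i ∧ c ≤ l.getD i 0)).card := rfl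

lemma leg_antitone (l : List ℕ) (a : ℕ) : Antitone (leg l a) := by
  intro c c' hcc'
  simp only [leg_eq_card]
  exact Finset.card_le_card fun i hi => by
    simp only [Finset.mem_filter, Finset.mem_range] at hi ⊢
    exact ⟨hi.1, hi.2.1, hcc'.trans hi.2.2⟩

lemma hook_strictAntiOn (l : List ℕ) (a : ℕ) :
    StrictAntiOn (hook l a) (Set.Iic (l.getD a 0)) := by
  intro c _ c' hc' hcc'
  have := leg_antitone l a hcc'.le
  simp only [Set.mem_Iic] at hc'
  simp only [hook_eq_arm_add_leg]
  omega

variable {l : List ℕ}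

lemma getD_antitone (hs : l.Pairwise (· ≥ ·)) {i j : ℕ} (hij : i ≤ j) (hj : j < l.length) :
    l.getD j 0 ≤ l.getD i 0 := by
  rw [List.getD_eq_getElem _ _ (hij.trans_lt hj), List.getD_eq_getElem _ _ hj]
  exact hs.rel_get_of_le (a := ⟨i, hij.trans_lt hj⟩) (b := ⟨j, hj⟩) hij

lemma getD_pos (hpos : ∀ x ∈ l, 0 < x) {i : ℕ} (hi : i < l.length) : 0 < l.getD i 0 := by
  rw [List.getD_eq_getElem l 0 hi]
  exact hpos _ (List.getElem_mem hi)

lemma leg_one (hpos : ∀ x ∈ l, 0 < x) (a : ℕ) : leg l a 1 = l.length - 1 - a := by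
  have : (Finset.range l.length).filter (fun i => a < i ∧ 1 ≤ l.getD i 0)
      = Finset.Ioo a l.length := by
    ext i
    simp only [Finset.mem_filter, Finset.mem_range, Finset.mem_Ioo]
    exact ⟨fun ⟨hi, hai, _⟩ => ⟨hai, hi⟩, fun ⟨hai, hi⟩ => ⟨hi, hai, getD_pos hpos hi⟩⟩
  rw [leg_eq_card, this, Nat.card_Ioo]
  omega

lemma hook_one (hpos : ∀ x ∈ l, 0 < x) {a : ℕ} (ha : a < l.length) :
    hook l a 1 = l.getD a 0 + (l.length - 1 - a) := by
  have := getD_pos hpos ha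
  rw [hook_eq_arm_add_leg, leg_one hpos]
  omega

lemma le_getD_iff_le_add_leg (hs : l.Pairwise (· ≥ ·)) {a i c : ℕ} (hai : a < i)
    (hi : i < l.length) : c ≤ l.getD i 0 ↔ i ≤ a + leg l a c := by
  constructor
  · intro hci
    have hsub : Finset.Ioc a i ⊆
        (Finset.range l.length).filter (fun j => a < j ∧ c ≤ l.getD j 0) := fun j hj => by
      simp only [Finset.mem_Ioc] at hj
      simp only [Finset.mem_filter, Finset.mem_range]
      exact ⟨hj.2.trans_lt hi, hj.1, hci.trans (getD_antitone hs hj.2 hi)⟩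
    have := Finset.card_le_card hsub
    rw [← leg_eq_card, Nat.card_Ioc] at this
    omega
  · intro hle
    by_contra! hic
    have hsub : (Finset.range l.length).filter (fun j => a < j ∧ c ≤ l.getD j 0)
        ⊆ Finset.Ioo a i := fun j hj => by
      simp only [Finset.mem_filter, Finset.mem_range] at hj
      simp only [Finset.mem_Ioo]
      refine ⟨hj.2.1, lt_of_not_ge fun hij => ?_⟩
      have := getD_antitone hs hij hj.1
      omega
    have := Finset.card_le_card hsub
    rw [← leg_eq_card, Nat.card_Ioo] at this
    omega

lemma leg_zero (hs : l.Pairwise (· ≥ ·)) {a c : ℕ} (ha : a < l.length) (hc : c ≤ l.getD a 0) :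
    leg l 0 c = leg l a c + a := by
  have hunion : (Finset.range l.length).filter (fun i => 0 < i ∧ c ≤ l.getD i 0)
      = (Finset.range l.length).filter (fun i => a < i ∧ c ≤ l.getD i 0) ∪ Finset.Ioc 0 a := by
    ext i
    simp only [Finset.mem_union, Finset.mem_filter, Finset.mem_range, Finset.mem_Ioc]
    constructor
    · rintro ⟨hi, hi0, hci⟩
      by_cases hai : a < i
      · exact Or.inl ⟨hi, hai, hci⟩
      · exact Or.inr ⟨hi0, by omega⟩
    · rintro (⟨hi, hai, hci⟩ | ⟨hi0, hia⟩)
      · exact ⟨hi, by omega, hci⟩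
      · exact ⟨by omega, hi0, hc.trans (getD_antitone hs hia ha)⟩
  have hdisj : Disjoint ((Finset.range l.length).filter (fun i => a < i ∧ c ≤ l.getD i 0))
      (Finset.Ioc 0 a) := by
    rw [Finset.disjoint_left]
    intro i hi hi'
    simp only [Finset.mem_filter, Finset.mem_Ioc] at hi hi'
    omega
  rw [leg_eq_card, leg_eq_card, hunion, Finset.card_union_of_disjoint hdisj, Nat.card_Ioc]
  omega

lemma hook_add_hook_zero_one (hs : l.Pairwise (· ≥ ·)) (hpos : ∀ x ∈ l, 0 < x) {a c : ℕ}
    (ha : a < l.length) (hc : c ≤ l.getD a 0) :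
    hook l a c + hook l 0 1 = hook l 0 c + hook l a 1 := by
  have := leg_zero hs ha hc
  have := getD_pos hpos ha
  have := getD_antitone hs (Nat.zero_le a) ha
  simp only [hook_eq_arm_add_leg, leg_one hpos]
  omega

lemma exists_hook_eq_or_hook_one_add_eq (hs : l.Pairwise (· ≥ ·)) (hpos : ∀ x ∈ l, 0 < x)
    {a v : ℕ} (ha : a < l.length) (hv1 : 1 ≤ v) (hv : v ≤ hook l a 1) :
    (∃ c, 1 ≤ c ∧ c ≤ l.getD a 0 ∧ hook l a c = v) ∨
      ∃ i, a < i ∧ i < l.length ∧ hook l i 1 + v = hook l a 1 := by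
  have hla := getD_pos hpos ha
  refine or_iff_not_imp_left.mpr fun hrow => ?_
  obtain ⟨c₀, hc₀1, hc₀, hlt, hnext⟩ : ∃ c₀, 1 ≤ c₀ ∧ c₀ ≤ l.getD a 0 ∧ v < hook l a c₀ ∧
      (c₀ < l.getD a 0 → hook l a (c₀ + 1) < v) := by
    set c₀ := Nat.findGreatest (fun c => v ≤ hook l a c) (l.getD a 0)
    have hc₀1 : 1 ≤ c₀ := Nat.le_findGreatest hla hv
    have hc₀ : c₀ ≤ l.getD a 0 := Nat.findGreatest_le _
    rcases (Nat.findGreatest_spec (P := fun c => v ≤ hook l a c) hla hv).eq_or_lt with heq | hlt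
    · exact absurd ⟨c₀, hc₀1, hc₀, heq.symm⟩ hrow
    exact ⟨c₀, hc₀1, hc₀, hlt, fun h => lt_of_not_ge
      (Nat.findGreatest_is_greatest (P := fun c => v ≤ hook l a c) (Nat.lt_succ_self c₀) h)⟩
  -- the row `i` is the one of length exactly `c₀` with `h(i, 1) = h(a, 1) - v`
  set i := a + (v + c₀ - l.getD a 0)
  have hai : a < i := by
    rcases hc₀.lt_or_eq with h | h
    · have := hnext h
      rw [hook_eq_arm_add_leg] at this
      omega
    · omega
  have hi_le : i ≤ a + leg l a c₀ := by
    rw [hook_eq_arm_add_leg] at hlt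
    omega
  have hi : i < l.length := by
    have := leg_antitone l a hc₀1
    rw [leg_one hpos] at this
    omega
  have hci : c₀ ≤ l.getD i 0 := (le_getD_iff_le_add_leg hs hai hi).mpr hi_le
  have hic : l.getD i 0 ≤ c₀ := by
    rcases hc₀.lt_or_eq with h | h
    · have := hnext h
      rw [hook_eq_arm_add_leg] at this
      have := mt (le_getD_iff_le_add_leg hs (c := c₀ + 1) hai hi).mp (by omega)
      omega
    · exact h ▸ getD_antitone hs hai.le hi
  refine ⟨i, hai, hi, ?_⟩
  rw [hook_one hpos hi, hook_one hpos ha]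
  omega

lemma hook_mod_eq_and_hook_lt_iff (hs : l.Pairwise (· ≥ ·)) (hpos : ∀ x ∈ l, 0 < x) {ℓ a c : ℕ}
    (hℓ : 0 < ℓ) (ha : a < l.length) (hc : c ≤ l.getD a 0) :
    (hook l 0 c % ℓ = hook l 0 1 % ℓ ∧ hook l a c < ℓ) ↔ hook l a c = hook l a 1 % ℓ := by
  have hid := congrArg (Nat.cast : ℕ → ZMod ℓ) (hook_add_hook_zero_one hs hpos ha hc)
  push_cast at hid
  have hmod : hook l 0 c % ℓ = hook l 0 1 % ℓ ↔ hook l a c % ℓ = hook l a 1 % ℓ := by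
    simp only [← ZMod.natCast_eq_natCast_iff']
    exact ⟨fun h => by linear_combination hid + h, fun h => by linear_combination h - hid⟩
  rw [hmod]
  exact ⟨fun ⟨h, hlt⟩ => Nat.mod_eq_of_lt hlt ▸ h,
    fun h => ⟨by rw [h, Nat.mod_mod], h ▸ Nat.mod_lt _ hℓ⟩⟩

end ListPartition

open ListPartition

theorem stmt16_general (ℓ : ℕ) (hℓ : 2 ≤ ℓ) (l : List ℕ)
    (hp : IsPartition l) (hc : IsCore ℓ l) :
    ∀ a < l.length, ∃! c : ℕ,
      1 ≤ c ∧ c ≤ l.getD a 0 ∧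
      hook l 0 c % ℓ = hook l 0 1 % ℓ ∧ hook l a c < ℓ := by
  intro a ha
  obtain ⟨hs, hpos⟩ := hp
  have hℓ0 : 0 < ℓ := by omega
  set r := hook l a 1 % ℓ
  have hr : 1 ≤ r := Nat.pos_of_ne_zero fun h =>
    hc a ha 1 le_rfl (getD_pos hpos ha) (Nat.dvd_of_mod_eq_zero h)
  obtain ⟨c, hc1, hca, hcr⟩ : ∃ c, 1 ≤ c ∧ c ≤ l.getD a 0 ∧ hook l a c = r := by
    refine (exists_hook_eq_or_hook_one_add_eq hs hpos ha hr (Nat.mod_le _ _)).resolve_right ?_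
    rintro ⟨i, hai, hi, hsum⟩
    refine hc i hi 1 le_rfl (getD_pos hpos hi) ⟨hook l a 1 / ℓ, ?_⟩
    have := Nat.div_add_mod (hook l a 1) ℓ
    omega
  refine ⟨c, ⟨hc1, hca, (hook_mod_eq_and_hook_lt_iff hs hpos hℓ0 ha hca).mpr hcr⟩, ?_⟩
  rintro c' ⟨-, hca', hc'⟩
  have hc'r := (hook_mod_eq_and_hook_lt_iff hs hpos hℓ0 ha hca').mp hc'
  exact (hook_strictAntiOn l a).injOn hca' hca (hc'r.trans hcr.symm)

/-- In each row of an ℓ-core of length k, exactly one box deleted by Φ̃ (the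
column-deletion bijection) has hook length < ℓ, i.e. is a skew box. -/
theorem stmt16 (ℓ k : ℕ) (hℓ : 2 ≤ ℓ) (hk : 0 < k) (l : List ℕ)
    (hp : IsPartition l) (hc : IsCore ℓ l) (hlen : l.length = k) :
    ∀ a < l.length, ∃! c : ℕ,
      1 ≤ c ∧ c ≤ l.getD a 0 ∧
      hook l 0 c % ℓ = hook l 0 1 % ℓ ∧ hook l a c < ℓ :=
  stmt16_general ℓ hℓ l hp hc
end

section
/- The Lapointe–Morse map ρ_ℓ and the column-deletion bijection Φ̃_ℓ^k commute with removing the first column: ρ_{ℓ−1}(Φ̃_ℓ^k(λ)) is obtained from ρ_ℓ(λ) by deleting its first column, for every ℓ-core λ of length k. -/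
/-- The Lapointe–Morse map ρ_ℓ: left-justify the skew boxes (hook length < ℓ)
of each row. -/
def rho (ℓ : ℕ) (l : List ℕ) : List ℕ :=
  (List.range l.length).map (fun a =>
    ((List.range (l.getD a 0)).filter (fun c => decide (hook l a (c + 1) < ℓ))).length)

/-!
Encode a partition `λ` with `n` rows by its beta-set `B = {β_a}`, `β_a = λ_a + (n - 1 - a)`, the
first-column hook lengths. The boxes of row `a` correspond to the gaps `d ∉ B` with `d < β_a`, the
box over `d` having hook length `β_a - d`. In these coordinates: `B` of an `ℓ`-core contains no
multiple of `ℓ`, and `d + ℓ` is a gap whenever `d` is; `Φ̃` deletes exactly the columns whose gap is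
a multiple of `ℓ`; and row `a` of `ρ_L(λ)` counts the gaps in the window `(β_a - L, β_a)`.

Numbering the non-multiples of `ℓ` in increasing order (`compress`) carries the beta-numbers and the
surviving gaps of `λ` to those of `Φ̃(λ)`, and the window of length `ℓ` below `β_a` onto the window
of length `ℓ - 1` below the new beta-number. The window of length `ℓ` contains exactly one multiple
of `ℓ`, always a gap, so each row of `ρ_{ℓ-1}(Φ̃ λ)` is one shorter than the same row of `ρ_ℓ(λ)`.
A row survives in `Φ̃(λ)` iff some gap below it is not a multiple of `ℓ`; the largest such gap then
lies in the window, so the surviving rows are exactly the rows of `ρ_ℓ(λ)` of length at least two.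
-/

open Finset

namespace Nat

variable {p : ℕ → Prop} [DecidablePred p]

theorem filter_range_eq_range_count_of_antitone (hp : Antitone p) (n : ℕ) :
    (List.range n).filter (fun i => decide (p i)) = List.range (count p n) := by
  induction n with
  | zero => simp
  | succ n ih =>
    rw [List.range_succ, List.filter_append, ih, count_succ]
    by_cases hn : p n
    · have hall : count p n = n := count_iff_forall.2 fun i hi => hp hi.le hn
      simp [hn, hall, List.range_succ]
    · simp [hn]

theorem lt_count_iff_of_antitone (hp : Antitone p) {a n : ℕ} :
    a < count p n ↔ a < n ∧ p a := by
  rw [← List.mem_range, ← filter_range_eq_range_count_of_antitone hp]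
  simp

theorem count_lt_and_of_antitone (hp : Antitone p) {a n : ℕ} (ha : a < count p n) :
    count (fun i => a < i ∧ p i) n = count p n - (a + 1) := by
  have hset : {i ∈ range n | a < i ∧ p i} = range (count p n) \ range (a + 1) := by
    ext i
    rw [mem_sdiff, mem_range, mem_range, lt_count_iff_of_antitone hp, mem_filter, mem_range]
    by_cases hpi : p i <;> simp [hpi]
  rw [count_eq_card_filter_range, hset, card_sdiff_of_subset (range_subset_range.2 ha),
    card_range, card_range]

theorem count_not_dvd_add_self {ℓ : ℕ} (hℓ : 0 < ℓ) (x : ℕ) :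
    count (fun d => ¬ ℓ ∣ d) (x + ℓ) = count (fun d => ¬ ℓ ∣ d) x + (ℓ - 1) := by
  induction x with
  | zero =>
    obtain ⟨m, rfl⟩ : ∃ m, ℓ = m + 1 := ⟨ℓ - 1, by omega⟩
    rw [zero_add, count_succ',
      count_of_forall fun k hk => Nat.not_dvd_of_pos_of_lt k.succ_pos (by omega)]
    simp
  | succ x ih =>
    rw [show x + 1 + ℓ = x + ℓ + 1 by omega, count_succ, count_succ, ih]
    simp only [Nat.dvd_add_self_right]
    split_ifs <;> omega

theorem count_not_dvd_lt_add_iff {ℓ β : ℕ} (hℓ : 0 < ℓ) (hβ : ¬ ℓ ∣ β) (d : ℕ) :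
    count (fun d => ¬ ℓ ∣ d) β < count (fun d => ¬ ℓ ∣ d) d + (ℓ - 1) ↔ β < d + ℓ := by
  rw [← count_not_dvd_add_self hℓ]
  constructor
  · intro h
    by_contra! hle
    exact absurd (count_monotone (fun d => ¬ ℓ ∣ d) hle) (by omega)
  · intro h
    calc count (fun d => ¬ ℓ ∣ d) β < count (fun d => ¬ ℓ ∣ d) (β + 1) :=
          count_lt_count_succ_iff.2 hβ
      _ ≤ _ := count_monotone _ h

theorem eq_of_dvd_of_lt_add {ℓ x y : ℕ} (hx : ℓ ∣ x) (hy : ℓ ∣ y) (hxy : x < y + ℓ)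
    (hyx : y < x + ℓ) : x = y := by
  wlog h : x ≤ y generalizing x y
  · exact (this hy hx hyx hxy (by omega)).symm
  have := Nat.eq_zero_of_dvd_of_lt (Nat.dvd_sub hy hx) (by omega)
  omega

end Nat

theorem List.map_range_getD {α : Type*} (l : List α) (d : α) :
    (List.range l.length).map (l.getD · d) = l :=
  List.ext_getElem (by simp) fun i _ h => by simp [List.getElem?_eq_getElem (by simpa using h)]

theorem IsPartition.getD_antitone {l : List ℕ} (hp : IsPartition l) : Antitone (l.getD · 0) := by
  intro a b hab
  show l.getD b 0 ≤ l.getD a 0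
  by_cases hb : b < l.length
  · rcases hab.eq_or_lt with rfl | hlt
    · rfl
    · simp only [List.getD_eq_getElem l 0 hb, List.getD_eq_getElem l 0 (hlt.trans hb)]
      exact List.pairwise_iff_getElem.1 hp.1 a b (hlt.trans hb) hb hlt
  · rw [List.getD_eq_default l 0 (not_lt.1 hb)]
    exact Nat.zero_le _

theorem IsPartition.getD_pos_s18 {l : List ℕ} (hp : IsPartition l) {a : ℕ} (ha : a < l.length) :
    0 < l.getD a 0 := by
  rw [List.getD_eq_getElem l 0 ha]
  exact hp.2 _ (List.getElem_mem ha)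

namespace LapointeMorse

variable {l : List ℕ} {ℓ a : ℕ}

def beta (l : List ℕ) (a : ℕ) : ℕ := l.getD a 0 + (l.length - 1 - a)

def betaSet (l : List ℕ) : Finset ℕ := (range l.length).image (beta l)

def colLen (l : List ℕ) (c : ℕ) : ℕ := Nat.count (fun i => c ≤ l.getD i 0) l.length

/-- The `c`-th smallest element of `ℕ \ betaSet l`: the boxes of column `c + 1` lie over it. -/
def gap (l : List ℕ) (c : ℕ) : ℕ := c + (l.length - colLen l (c + 1))

def gapsBelow (l : List ℕ) (a : ℕ) : Finset ℕ := {d ∈ range (beta l a) | d ∉ betaSet l}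

theorem beta_antitone (hp : IsPartition l) : Antitone (beta l) := by
  intro a b hab
  have : l.getD b 0 ≤ l.getD a 0 := hp.getD_antitone hab
  by_cases hb : b < l.length
  · unfold beta; omega
  · simp only [beta, List.getD_eq_default l 0 (not_lt.1 hb)]
    omega

theorem beta_lt_beta (hp : IsPartition l) {b : ℕ} (ha : a < l.length) (hab : a < b) :
    beta l b < beta l a := by
  have : l.getD b 0 ≤ l.getD a 0 := hp.getD_antitone hab.le
  have := hp.getD_pos_s18 ha
  by_cases hb : b < l.length
  · have := hp.getD_pos_s18 hb
    unfold beta; omega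
  · simp only [beta, List.getD_eq_default l 0 (not_lt.1 hb)]
    omega

theorem mem_betaSet {x : ℕ} : x ∈ betaSet l ↔ ∃ a < l.length, beta l a = x := by
  simp [betaSet]

theorem beta_mem_betaSet (ha : a < l.length) : beta l a ∈ betaSet l :=
  mem_betaSet.2 ⟨a, ha, rfl⟩

theorem pos_of_mem_betaSet (hp : IsPartition l) {b : ℕ} (hb : b ∈ betaSet l) : 0 < b := by
  obtain ⟨a, ha, rfl⟩ := mem_betaSet.1 hb
  have := hp.getD_pos_s18 ha
  unfold beta; omega

theorem lt_colLen_iff (hp : IsPartition l) {i c : ℕ} :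
    i < colLen l c ↔ i < l.length ∧ c ≤ l.getD i 0 :=
  Nat.lt_count_iff_of_antitone fun _ _ hij h => h.trans (hp.getD_antitone hij)

theorem hook_add_gap (hp : IsPartition l) {c : ℕ} (ha : a < l.length) (hc : c < l.getD a 0) :
    hook l a (c + 1) + gap l c = beta l a := by
  have hrow : a < colLen l (c + 1) := (lt_colLen_iff hp).2 ⟨ha, hc⟩
  have hbelow : ((List.range l.length).filter
      (fun i => decide (a < i ∧ c + 1 ≤ l.getD i 0))).length = colLen l (c + 1) - (a + 1) :=
    (List.countP_eq_length_filter ..).symm.trans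
      (Nat.count_lt_and_of_antitone (fun _ _ hij h => h.trans (hp.getD_antitone hij)) hrow)
  have : colLen l (c + 1) ≤ l.length := Nat.count_le _
  simp only [hook, gap, beta, hbelow]
  omega

theorem gap_strictMono : StrictMono (gap l) := by
  intro c c' hcc'
  have : colLen l (c' + 1) ≤ colLen l (c + 1) :=
    Nat.count_mono_left fun _ _ h => le_trans (by omega) h
  have : colLen l (c + 1) ≤ l.length := Nat.count_le _
  unfold gap; omega

theorem gap_zero (hp : IsPartition l) : gap l 0 = 0 := by
  have : colLen l 1 = l.length := Nat.count_iff_forall.2 fun _ hi => hp.getD_pos_s18 hi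
  simp [gap, this]

theorem gap_notMem_betaSet (hp : IsPartition l) (c : ℕ) : gap l c ∉ betaSet l := by
  intro hmem
  obtain ⟨i, hi, heq⟩ := mem_betaSet.1 hmem
  have hiff : i < colLen l (c + 1) ↔ c + 1 ≤ l.getD i 0 := by
    rw [lt_colLen_iff hp]; exact and_iff_right hi
  have : colLen l (c + 1) ≤ l.length := Nat.count_le _
  unfold gap beta at heq
  by_cases h : c + 1 ≤ l.getD i 0
  · have := hiff.2 h; omega
  · have := mt hiff.1 h; omega

theorem card_betaSet_below (hp : IsPartition l) (ha : a < l.length) :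
    #{d ∈ range (beta l a) | d ∈ betaSet l} = l.length - 1 - a := by
  have hset : {d ∈ range (beta l a) | d ∈ betaSet l} = (Ioo a l.length).image (beta l) := by
    ext x
    simp only [mem_filter, mem_range, mem_betaSet, mem_image, mem_Ioo]
    constructor
    · rintro ⟨hx, i, hi, rfl⟩
      refine ⟨i, ⟨?_, hi⟩, rfl⟩
      by_contra! hia
      exact absurd (beta_antitone hp hia) (by omega)
    · rintro ⟨i, ⟨hai, hi⟩, rfl⟩
      exact ⟨beta_lt_beta hp ha hai, i, hi, rfl⟩
  have hinj : Set.InjOn (beta l) (Ioo a l.length) := fun i hi j hj hij => by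
    simp only [coe_Ioo, Set.mem_Ioo] at hi hj
    by_contra hne
    rcases lt_or_gt_of_ne hne with h | h
    · exact (beta_lt_beta hp hi.2 h).ne' hij
    · exact (beta_lt_beta hp hj.2 h).ne hij
  rw [hset, card_image_of_injOn hinj, Nat.card_Ioo]
  omega

theorem card_gapsBelow (hp : IsPartition l) (ha : a < l.length) :
    #(gapsBelow l a) = l.getD a 0 := by
  have := card_betaSet_below hp ha
  have hsplit : #{d ∈ range (beta l a) | d ∈ betaSet l} + #(gapsBelow l a) = beta l a := by
    rw [gapsBelow, card_filter_add_card_filter_not, card_range]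
  have : beta l a = l.getD a 0 + (l.length - 1 - a) := rfl
  omega

theorem image_gap (hp : IsPartition l) (ha : a < l.length) :
    (range (l.getD a 0)).image (gap l) = gapsBelow l a := by
  refine eq_of_subset_of_card_le (fun x hx => ?_) ?_
  · obtain ⟨c, hc, rfl⟩ := mem_image.1 hx
    have := hook_add_gap hp ha (mem_range.1 hc)
    have : 0 < hook l a (c + 1) := by unfold hook; omega
    exact mem_filter.2 ⟨mem_range.2 (by omega), gap_notMem_betaSet hp c⟩
  · rw [card_gapsBelow hp ha, card_image_of_injective _ gap_strictMono.injective, card_range]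

theorem card_filter_gap (hp : IsPartition l) (ha : a < l.length)
    (P : ℕ → Prop) [DecidablePred P] :
    #{c ∈ range (l.getD a 0) | P (gap l c)} = #{d ∈ gapsBelow l a | P d} := by
  rw [← image_gap hp ha, filter_image, card_image_of_injective _ gap_strictMono.injective]

def windowGaps (L : ℕ) (l : List ℕ) (a : ℕ) : Finset ℕ :=
  {d ∈ gapsBelow l a | beta l a < d + L}

def keptGaps (ℓ : ℕ) (l : List ℕ) (a : ℕ) : Finset ℕ := {d ∈ gapsBelow l a | ¬ ℓ ∣ d}

theorem rho_eq_map (hp : IsPartition l) (L : ℕ) :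
    rho L l = (List.range l.length).map fun a => #(windowGaps L l a) := by
  refine List.map_congr_left fun a ha => ?_
  replace ha := List.mem_range.1 ha
  rw [← List.countP_eq_length_filter]
  change Nat.count (fun c => hook l a (c + 1) < L) _ = _
  rw [Nat.count_eq_card_filter_range, windowGaps, ← card_filter_gap hp ha]
  refine congrArg card (filter_congr fun c hc => ?_)
  have := hook_add_gap hp ha (mem_range.1 hc)
  omega

theorem hook_mod_eq_hook_one_mod_iff (hp : IsPartition l) {c : ℕ} (hc : c < l.getD 0 0) :
    hook l 0 (c + 1) % ℓ = hook l 0 1 % ℓ ↔ ℓ ∣ gap l c := by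
  have h0 : 0 < l.length := by
    by_contra! h
    simp [List.length_eq_zero_iff.1 (Nat.le_zero.1 h)] at hc
  have hroot : hook l 0 1 = beta l 0 := by
    simpa [gap_zero hp] using hook_add_gap hp h0 (hp.getD_pos_s18 h0)
  have hsum := hook_add_gap hp h0 hc
  rw [← Nat.ModEq, Nat.modEq_iff_dvd' (by omega), show hook l 0 1 - hook l 0 (c + 1) = gap l c by
    omega]

theorem tilde_eq_filter (hp : IsPartition l) (ℓ : ℕ) :
    tilde ℓ l = ((List.range l.length).map fun a => #(keptGaps ℓ l a)).filter
      (fun x => decide (0 < x)) := by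
  have hrow : ∀ a < l.length, ((List.range (l.getD a 0)).filter
      (fun c => decide (¬ hook l 0 (c + 1) % ℓ = hook l 0 1 % ℓ))).length
        = #(keptGaps ℓ l a) := by
    intro a ha
    rw [← List.countP_eq_length_filter]
    change Nat.count (fun c => ¬ hook l 0 (c + 1) % ℓ = hook l 0 1 % ℓ) _ = _
    rw [Nat.count_eq_card_filter_range, keptGaps, ← card_filter_gap hp ha]
    refine congrArg card (filter_congr fun c hc => not_congr ?_)
    exact hook_mod_eq_hook_one_mod_iff hp
      ((mem_range.1 hc).trans_le (hp.getD_antitone (Nat.zero_le a)))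
  unfold tilde
  congr 1
  calc l.map _ = ((List.range l.length).map (l.getD · 0)).map _ := by rw [l.map_range_getD]
    _ = _ := by
      rw [List.map_map]
      exact List.map_congr_left fun a ha => hrow a (List.mem_range.1 ha)

theorem not_dvd_sub_of_isCore (hp : IsPartition l) (hc : IsCore ℓ l) {b d : ℕ}
    (hb : b ∈ betaSet l) (hd : d ∉ betaSet l) (hdb : d < b) : ¬ ℓ ∣ b - d := by
  obtain ⟨a, ha, rfl⟩ := mem_betaSet.1 hb
  have hgap : d ∈ gapsBelow l a := mem_filter.2 ⟨mem_range.2 hdb, hd⟩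
  rw [← image_gap hp ha] at hgap
  obtain ⟨c, hcol, rfl⟩ := mem_image.1 hgap
  have := hook_add_gap hp ha (mem_range.1 hcol)
  rw [show beta l a - gap l c = hook l a (c + 1) by omega]
  exact hc a ha (c + 1) le_add_self (mem_range.1 hcol)

theorem add_notMem_betaSet (hp : IsPartition l) (hc : IsCore ℓ l) (hℓ : 0 < ℓ) {d : ℕ}
    (hd : d ∉ betaSet l) : d + ℓ ∉ betaSet l := fun hmem =>
  not_dvd_sub_of_isCore hp hc hmem hd (by omega) (by simp)

theorem not_dvd_of_mem_betaSet (hp : IsPartition l) (hc : IsCore ℓ l) (hℓ : 0 < ℓ)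
    {b : ℕ} (hb : b ∈ betaSet l) : ¬ ℓ ∣ b := by
  rintro ⟨q, rfl⟩
  induction q with
  | zero => exact absurd (pos_of_mem_betaSet hp hb) (by simp)
  | succ q ih => exact add_notMem_betaSet hp hc hℓ (fun h => ih h) hb

theorem card_keptGaps_antitone (hp : IsPartition l) (ℓ : ℕ) :
    Antitone fun a => #(keptGaps ℓ l a) := fun a b hab =>
  card_le_card fun d hd => by
    simp only [keptGaps, gapsBelow, mem_filter, mem_range] at hd ⊢
    exact ⟨⟨hd.1.1.trans_le (beta_antitone hp hab), hd.1.2⟩, hd.2⟩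

theorem pos_card_keptGaps_antitone (hp : IsPartition l) (ℓ : ℕ) :
    Antitone fun a => 0 < #(keptGaps ℓ l a) := fun _ _ hab h =>
  h.trans_le (card_keptGaps_antitone hp ℓ hab)

theorem tilde_eq_map (hp : IsPartition l) (ℓ : ℕ) :
    tilde ℓ l = (List.range (Nat.count (fun a => 0 < #(keptGaps ℓ l a)) l.length)).map
      fun a => #(keptGaps ℓ l a) := by
  rw [tilde_eq_filter hp, List.filter_map,
    ← Nat.filter_range_eq_range_count_of_antitone (pos_card_keptGaps_antitone hp ℓ)]
  rfl

theorem lt_length_tilde_iff (hp : IsPartition l) :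
    a < (tilde ℓ l).length ↔ a < l.length ∧ 0 < #(keptGaps ℓ l a) := by
  rw [tilde_eq_map hp, List.length_map, List.length_range]
  exact Nat.lt_count_iff_of_antitone (pos_card_keptGaps_antitone hp ℓ)

theorem length_tilde_le (hp : IsPartition l) (ℓ : ℕ) : (tilde ℓ l).length ≤ l.length := by
  by_contra! h
  exact absurd ((lt_length_tilde_iff hp).1 h).1 (lt_irrefl _)

theorem getD_tilde (hp : IsPartition l) (ha : a < (tilde ℓ l).length) :
    (tilde ℓ l).getD a 0 = #(keptGaps ℓ l a) := by
  rw [List.getD_eq_getElem _ 0 ha]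
  simp only [tilde_eq_map hp, List.getElem_map, List.getElem_range]

theorem isPartition_tilde (hp : IsPartition l) (ℓ : ℕ) : IsPartition (tilde ℓ l) := by
  rw [tilde_eq_map hp]
  refine ⟨List.pairwise_map.2 (List.pairwise_lt_range.imp fun hab =>
    card_keptGaps_antitone hp ℓ hab.le), ?_⟩
  simp only [List.mem_map, List.mem_range]
  rintro _ ⟨a, ha, rfl⟩
  exact ((Nat.lt_count_iff_of_antitone (pos_card_keptGaps_antitone hp ℓ)).1 ha).2

theorem card_keptGaps_add (hp : IsPartition l) (hc : IsCore ℓ l) (hℓ : 0 < ℓ)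
    (ha : a < l.length) :
    #(keptGaps ℓ l a) + (l.length - 1 - a) = Nat.count (fun d => ¬ ℓ ∣ d) (beta l a) := by
  have hkept : {d ∈ {d ∈ range (beta l a) | ¬ ℓ ∣ d} | d ∉ betaSet l} = keptGaps ℓ l a := by
    ext d
    simp only [keptGaps, gapsBelow, mem_filter]
    tauto
  have hbeta : {d ∈ {d ∈ range (beta l a) | ¬ ℓ ∣ d} | ¬ d ∉ betaSet l}
      = {d ∈ range (beta l a) | d ∈ betaSet l} := by
    ext d
    simp only [mem_filter, not_not]
    exact ⟨fun h => ⟨h.1.1, h.2⟩, fun h => ⟨⟨h.1, not_dvd_of_mem_betaSet hp hc hℓ h.2⟩, h.2⟩⟩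
  rw [Nat.count_eq_card_filter_range, ← card_betaSet_below hp ha, ← hkept, ← hbeta,
    card_filter_add_card_filter_not]

def compressDomain (ℓ : ℕ) (l : List ℕ) : Set ℕ :=
  {x | ¬ ℓ ∣ x ∧ beta l (tilde ℓ l).length < x}

def compress (ℓ : ℕ) (l : List ℕ) (x : ℕ) : ℕ :=
  Nat.count (fun d => ¬ ℓ ∣ d) x - (l.length - (tilde ℓ l).length)

theorem mem_keptGaps_compressDomain (hp : IsPartition l) {d : ℕ} (hd : d ∈ keptGaps ℓ l a) :
    d ∈ compressDomain ℓ l := by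
  simp only [keptGaps, gapsBelow, mem_filter] at hd
  refine ⟨hd.2, ?_⟩
  set m := (tilde ℓ l).length
  by_cases hm : m < l.length
  · by_contra! hle
    have hne : d ≠ beta l m := fun h => hd.1.2 (h ▸ beta_mem_betaSet hm)
    have hkept : d ∈ keptGaps ℓ l m :=
      mem_filter.2 ⟨mem_filter.2 ⟨mem_range.2 (lt_of_le_of_ne hle hne), hd.1.2⟩, hd.2⟩
    exact lt_irrefl m ((lt_length_tilde_iff hp).2 ⟨hm, card_pos.2 ⟨d, hkept⟩⟩)
  · rw [beta, List.getD_eq_default l 0 (not_lt.1 hm)]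
    have : d ≠ 0 := by rintro rfl; exact hd.2 (dvd_zero ℓ)
    omega

theorem beta_mem_compressDomain (hp : IsPartition l) (hc : IsCore ℓ l) (hℓ : 0 < ℓ)
    (ha : a < (tilde ℓ l).length) : beta l a ∈ compressDomain ℓ l :=
  have ha' := ha.trans_le (length_tilde_le hp ℓ)
  ⟨not_dvd_of_mem_betaSet hp hc hℓ (beta_mem_betaSet ha'), beta_lt_beta hp ha' ha⟩

theorem length_sub_le_count (hp : IsPartition l) (hc : IsCore ℓ l) (hℓ : 0 < ℓ) {x : ℕ}
    (hx : x ∈ compressDomain ℓ l) :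
    l.length - (tilde ℓ l).length ≤ Nat.count (fun d => ¬ ℓ ∣ d) x := by
  by_cases hm : (tilde ℓ l).length < l.length
  · have := card_keptGaps_add hp hc hℓ hm
    have := Nat.count_strict_mono (p := fun d => ¬ ℓ ∣ d)
      (not_dvd_of_mem_betaSet hp hc hℓ (beta_mem_betaSet hm)) hx.2
    omega
  · omega

theorem compress_injOn (hp : IsPartition l) (hc : IsCore ℓ l) (hℓ : 0 < ℓ) :
    Set.InjOn (compress ℓ l) (compressDomain ℓ l) := by
  intro x hx y hy hxy
  have := length_sub_le_count hp hc hℓ hx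
  have := length_sub_le_count hp hc hℓ hy
  exact Nat.count_injective (p := fun d => ¬ ℓ ∣ d) hx.1 hy.1 (by unfold compress at hxy; omega)

theorem beta_tilde (hp : IsPartition l) (hc : IsCore ℓ l) (hℓ : 0 < ℓ)
    (ha : a < (tilde ℓ l).length) : beta (tilde ℓ l) a = compress ℓ l (beta l a) := by
  have hm := length_tilde_le hp ℓ
  have := card_keptGaps_add hp hc hℓ (ha.trans_le hm)
  show (tilde ℓ l).getD a 0 + ((tilde ℓ l).length - 1 - a) = _
  rw [getD_tilde hp ha, compress]
  omega

theorem gapsBelow_tilde (hp : IsPartition l) (hc : IsCore ℓ l) (hℓ : 0 < ℓ)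
    (ha : a < (tilde ℓ l).length) :
    gapsBelow (tilde ℓ l) a = (keptGaps ℓ l a).image (compress ℓ l) := by
  have hinj := (compress_injOn hp hc hℓ).mono fun _ hd => mem_keptGaps_compressDomain (a := a) hp hd
  refine (eq_of_subset_of_card_le (fun y hy => ?_) ?_).symm
  · obtain ⟨d, hd, rfl⟩ := mem_image.1 hy
    have hdS := mem_keptGaps_compressDomain hp hd
    simp only [keptGaps, gapsBelow, mem_filter, mem_range] at hd
    refine mem_filter.2 ⟨mem_range.2 ?_, fun hmem => ?_⟩
    · have := length_sub_le_count hp hc hℓ hdS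
      have := Nat.count_strict_mono (p := fun d => ¬ ℓ ∣ d) hdS.1 hd.1.1
      rw [beta_tilde hp hc hℓ ha]
      unfold compress
      omega
    · obtain ⟨i, hi, heq⟩ := mem_betaSet.1 hmem
      rw [beta_tilde hp hc hℓ hi] at heq
      have := compress_injOn hp hc hℓ (beta_mem_compressDomain hp hc hℓ hi) hdS heq
      exact hd.1.2 (this ▸ beta_mem_betaSet (hi.trans_le (length_tilde_le hp ℓ)))
  · rw [card_image_of_injOn hinj, card_gapsBelow (isPartition_tilde hp ℓ) ha, getD_tilde hp ha]

theorem card_windowGaps_tilde (hp : IsPartition l) (hc : IsCore ℓ l) (hℓ : 0 < ℓ)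
    (ha : a < (tilde ℓ l).length) :
    #(windowGaps (ℓ - 1) (tilde ℓ l) a) = #{d ∈ keptGaps ℓ l a | beta l a < d + ℓ} := by
  have hinj := (compress_injOn hp hc hℓ).mono fun _ hd => mem_keptGaps_compressDomain (a := a) hp hd
  rw [windowGaps, gapsBelow_tilde hp hc hℓ ha, filter_image,
    card_image_of_injOn (hinj.mono (coe_subset.2 (filter_subset _ _))), beta_tilde hp hc hℓ ha]
  refine congrArg card (filter_congr fun d hd => ?_)
  have hβS := beta_mem_compressDomain hp hc hℓ ha
  have := length_sub_le_count hp hc hℓ (mem_keptGaps_compressDomain hp hd)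
  have := length_sub_le_count hp hc hℓ hβS
  rw [← Nat.count_not_dvd_lt_add_iff hℓ hβS.1]
  unfold compress
  omega

theorem card_filter_dvd_windowGaps (hp : IsPartition l) (hc : IsCore ℓ l) (hℓ : 0 < ℓ)
    (ha : a < l.length) : #{d ∈ windowGaps ℓ l a | ℓ ∣ d} = 1 := by
  set β := beta l a
  have hβ : ¬ ℓ ∣ β := not_dvd_of_mem_betaSet hp hc hℓ (beta_mem_betaSet ha)
  have : 0 < β % ℓ := Nat.pos_of_ne_zero fun h => hβ (Nat.dvd_of_mod_eq_zero h)
  have : β % ℓ < ℓ := Nat.mod_lt β hℓ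
  have : β % ℓ ≤ β := Nat.mod_le β ℓ
  have hμ : ℓ ∣ β - β % ℓ := Nat.dvd_sub_mod β
  rw [card_eq_one]
  refine ⟨β - β % ℓ, ext fun d => ?_⟩
  simp only [windowGaps, gapsBelow, mem_filter, mem_range, mem_singleton]
  constructor
  · rintro ⟨⟨⟨hdβ, -⟩, hwin⟩, hd⟩
    exact Nat.eq_of_dvd_of_lt_add hd hμ (by omega) (by omega)
  · rintro rfl
    exact ⟨⟨⟨by omega, fun hmem => not_dvd_of_mem_betaSet hp hc hℓ hmem hμ⟩, by omega⟩, hμ⟩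

theorem card_windowGaps (hp : IsPartition l) (hc : IsCore ℓ l) (hℓ : 0 < ℓ)
    (ha : a < l.length) :
    #(windowGaps ℓ l a) = #{d ∈ keptGaps ℓ l a | beta l a < d + ℓ} + 1 := by
  rw [← card_filter_dvd_windowGaps hp hc hℓ ha, add_comm,
    ← card_filter_add_card_filter_not (p := fun d => ℓ ∣ d), windowGaps, keptGaps,
    filter_comm (p := fun d => beta l a < d + ℓ) (q := fun d => ¬ ℓ ∣ d)]

theorem exists_mem_keptGaps_window (hp : IsPartition l) (hc : IsCore ℓ l) (hℓ : 0 < ℓ)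
    (ha : a < l.length) (hne : (keptGaps ℓ l a).Nonempty) :
    ∃ d ∈ keptGaps ℓ l a, beta l a < d + ℓ := by
  refine ⟨(keptGaps ℓ l a).max' hne, max'_mem _ _, ?_⟩
  set d := (keptGaps ℓ l a).max' hne
  have hd : d ∈ keptGaps ℓ l a := max'_mem _ _
  simp only [keptGaps, gapsBelow, mem_filter, mem_range] at hd
  by_contra! hout
  have hnotMem := add_notMem_betaSet hp hc hℓ hd.1.2
  have hne' : d + ℓ ≠ beta l a := fun h => hnotMem (h ▸ beta_mem_betaSet ha)
  have hkept : d + ℓ ∈ keptGaps ℓ l a := by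
    simp only [keptGaps, gapsBelow, mem_filter, mem_range, Nat.dvd_add_self_right]
    exact ⟨⟨lt_of_le_of_ne hout hne', hnotMem⟩, hd.2⟩
  exact absurd (le_max' _ _ hkept) (by omega)

theorem card_windowGaps_tilde_eq (hp : IsPartition l) (hc : IsCore ℓ l) (hℓ : 0 < ℓ)
    (ha : a < (tilde ℓ l).length) :
    #(windowGaps (ℓ - 1) (tilde ℓ l) a) = #(windowGaps ℓ l a) - 1 := by
  rw [card_windowGaps_tilde hp hc hℓ ha,
    card_windowGaps hp hc hℓ (ha.trans_le (length_tilde_le hp ℓ)), Nat.add_sub_cancel]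

theorem one_lt_card_windowGaps_iff (hp : IsPartition l) (hc : IsCore ℓ l) (hℓ : 0 < ℓ)
    (ha : a < l.length) : 1 < #(windowGaps ℓ l a) ↔ 0 < #(keptGaps ℓ l a) := by
  rw [card_windowGaps hp hc hℓ ha, Nat.lt_add_left_iff_pos, card_pos, card_pos]
  constructor
  · exact fun ⟨d, hd⟩ => ⟨d, (mem_filter.1 hd).1⟩
  · intro hne
    obtain ⟨d, hd, hwin⟩ := exists_mem_keptGaps_window hp hc hℓ ha hne
    exact ⟨d, mem_filter.2 ⟨hd, hwin⟩⟩

end LapointeMorse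

open LapointeMorse

theorem stmt18_general (ℓ : ℕ) (hℓ : 2 ≤ ℓ) (l : List ℕ)
    (hp : IsPartition l) (hc : IsCore ℓ l) :
    rho (ℓ - 1) (tilde ℓ l) =
      ((rho ℓ l).map (fun x => x - 1)).filter (fun x => decide (0 < x)) := by
  have hℓ0 : 0 < ℓ := by omega
  have hrows : (List.range l.length).filter (fun a => decide (0 < #(windowGaps ℓ l a) - 1))
      = List.range (tilde ℓ l).length := by
    rw [tilde_eq_map hp, List.length_map, List.length_range,
      ← Nat.filter_range_eq_range_count_of_antitone (pos_card_keptGaps_antitone hp ℓ)]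
    refine List.filter_congr fun a ha => ?_
    simp only [decide_eq_decide, Nat.sub_pos_iff_lt]
    exact one_lt_card_windowGaps_iff hp hc hℓ0 (List.mem_range.1 ha)
  rw [rho_eq_map (isPartition_tilde hp ℓ), rho_eq_map hp, List.map_map, List.filter_map]
  simp only [Function.comp_def]
  rw [hrows]
  exact List.map_congr_left fun a ha =>
    card_windowGaps_tilde_eq hp hc hℓ0 (List.mem_range.1 ha)

/-- ρ_{ℓ-1}(Φ̃_ℓ^k(λ)) is obtained from ρ_ℓ(λ) by deleting its first column. -/
theorem stmt18 (ℓ k : ℕ) (hℓ : 2 ≤ ℓ) (l : List ℕ)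
    (hp : IsPartition l) (hc : IsCore ℓ l) (hlen : l.length = k) :
    rho (ℓ - 1) (tilde ℓ l) =
      ((rho ℓ l).map (fun x => x - 1)).filter (fun x => decide (0 < x)) :=
  stmt18_general ℓ hℓ l hp hc
end

section
/- If λ is an ℓ-core with at least one part and i is the residue of the last box of its bottom row, then every box of λ of residue i that is at the end of its row corresponds to an active bead on runner i with a gap immediately before it in reading order; consequently, removing all end-of-row boxes of residue i from λ yields an ℓ-core μ with |μ| = |λ| − (number of rows a of λ with λ_a − a ≡ λ_m − m mod ℓ), where m is the number of parts of λ. -/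
/-- Residue (mod ℓ) of the content of the rightmost box of the bottom row. -/
def bottomRes (ℓ : ℕ) (l : List ℕ) : ℤ := ((l.getD (l.length - 1) 0 : ℤ) - l.length) % ℓ

/-- Remove one box from each row whose rightmost box has the residue of the
bottom row's rightmost box, dropping rows that become empty. -/
def removeRes (ℓ : ℕ) (l : List ℕ) : List ℕ :=
  ((List.range l.length).map (fun a =>
    if ((l.getD a 0 : ℤ) - (a + 1)) % ℓ = bottomRes ℓ l
    then l.getD a 0 - 1 else l.getD a 0)).filter (fun x => decide (0 < x))

namespace S19

/-- beta number of row `a`. -/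
def B (l : List ℕ) (a : ℕ) : ℕ := l.getD a 0 + (l.length - 1 - a)

/-- the beta-set. -/
def Bset (l : List ℕ) : Finset ℕ := (Finset.range l.length).image (B l)

/-- the complement position of box (a,c). -/
def X (l : List ℕ) (a c : ℕ) : ℕ :=
  (c - 1) + ((Finset.range l.length).filter (fun i => a < i ∧ l.getD i 0 < c)).card

lemma pos_of_lt (hp : IsPartition l) (ha : a < l.length) : 0 < l.getD a 0 := by
  rw [List.getD_eq_getElem _ _ ha]; exact hp.2 _ (l.getElem_mem ha)

lemma anti (hp : IsPartition l) (hab : a ≤ b) (hb : b < l.length) :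
    l.getD b 0 ≤ l.getD a 0 := by
  rcases eq_or_lt_of_le hab with rfl | hab
  · rfl
  · rw [List.getD_eq_getElem _ _ hb, List.getD_eq_getElem _ _ (lt_trans hab hb)]
    exact List.pairwise_iff_get.1 hp.1 ⟨a, _⟩ ⟨b, _⟩ hab

lemma B_strict (hp : IsPartition l) (hab : a < b) (hb : b < l.length) :
    B l b < B l a := by
  have h1 := anti hp (le_of_lt hab) hb
  unfold B; omega

lemma B_lt_iff (hp : IsPartition l) (ha : a < l.length) (hb : b < l.length) :
    B l b < B l a ↔ a < b := by
  constructor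
  · intro h
    by_contra hab
    rcases eq_or_lt_of_le (not_lt.1 hab) with rfl | hba
    · omega
    · exact absurd (B_strict hp hba ha) (by omega)
  · intro h; exact B_strict hp h hb

lemma filter_range_card (n a : ℕ) (ha : a < n) :
    ((Finset.range n).filter (fun i => a < i)).card = n - 1 - a := by
  have : (Finset.range n).filter (fun i => a < i) = Finset.Ico (a+1) n := by
    ext i; simp [Finset.mem_filter, Finset.mem_range, Finset.mem_Ico]; omega
  rw [this, Nat.card_Ico]; omega

lemma hook_add_X (hp : IsPartition l) (ha : a < l.length) (hc1 : 1 ≤ c)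
    (hc2 : c ≤ l.getD a 0) : hook l a c + X l a c = B l a := by
  have key : ((Finset.range l.length).filter (fun i => a < i ∧ c ≤ l.getD i 0)).card
      + ((Finset.range l.length).filter (fun i => a < i ∧ l.getD i 0 < c)).card
      = l.length - 1 - a := by
    have h := Finset.card_filter_add_card_filter_not
      (s := (Finset.range l.length).filter (fun i => a < i)) (p := fun i => c ≤ l.getD i 0)
    simp only [not_le] at h
    have e1 : ((Finset.range l.length).filter (fun i => a < i)).filter (fun i => c ≤ l.getD i 0)
        = (Finset.range l.length).filter (fun i => a < i ∧ c ≤ l.getD i 0) := by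
      rw [Finset.filter_filter]
    have e2 : ((Finset.range l.length).filter (fun i => a < i)).filter (fun i => l.getD i 0 < c)
        = (Finset.range l.length).filter (fun i => a < i ∧ l.getD i 0 < c) := by
      rw [Finset.filter_filter]
    rw [e1, e2] at h
    rw [← filter_range_card l.length a ha]
    exact h
  have hh : hook l a c = (l.getD a 0 - c) +
      ((Finset.range l.length).filter (fun i => a < i ∧ c ≤ l.getD i 0)).card + 1 := rfl
  unfold X B
  omega


lemma hook_pos : 1 ≤ hook l a c := by unfold hook; omega

lemma X_lt (hp : IsPartition l) (ha : a < l.length) (hc1 : 1 ≤ c)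
    (hc2 : c ≤ l.getD a 0) : X l a c < B l a := by
  have h := hook_add_X hp ha hc1 hc2
  have := hook_pos (l := l) (a := a) (c := c)
  omega

lemma mem_Bset (ha : a < l.length) : B l a ∈ Bset l :=
  Finset.mem_image.2 ⟨a, Finset.mem_range.2 ha, rfl⟩

lemma X_not_mem (hp : IsPartition l) (ha : a < l.length) (hc1 : 1 ≤ c)
    (hc2 : c ≤ l.getD a 0) : X l a c ∉ Bset l := by
  intro hmem
  obtain ⟨j, hj, hBj⟩ := Finset.mem_image.1 hmem
  rw [Finset.mem_range] at hj
  have hXlt := X_lt hp ha hc1 hc2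
  have haj : a < j := (B_lt_iff hp ha hj).1 (by omega)
  by_cases hcase : c ≤ l.getD j 0
  · -- cnt ≤ n-1-j
    have hsub : (Finset.range l.length).filter (fun i => a < i ∧ l.getD i 0 < c)
        ⊆ Finset.Ico (j+1) l.length := by
      intro i hi
      simp only [Finset.mem_filter, Finset.mem_range] at hi
      simp only [Finset.mem_Ico]
      refine ⟨?_, hi.1⟩
      by_contra hij
      have := anti hp (by omega : i ≤ j) hj
      omega
    have hcard := Finset.card_le_card hsub
    rw [Nat.card_Ico] at hcard
    have hBjv : B l j = l.getD j 0 + (l.length - 1 - j) := rfl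
    unfold X at hBj
    omega
  · -- cnt ≥ n - j
    have hsub : Finset.Ico j l.length
        ⊆ (Finset.range l.length).filter (fun i => a < i ∧ l.getD i 0 < c) := by
      intro i hi
      simp only [Finset.mem_Ico] at hi
      simp only [Finset.mem_filter, Finset.mem_range]
      refine ⟨hi.2, by omega, ?_⟩
      have := anti hp hi.1 hi.2
      omega
    have hcard := Finset.card_le_card hsub
    rw [Nat.card_Ico] at hcard
    have hBjv : B l j = l.getD j 0 + (l.length - 1 - j) := rfl
    unfold X at hBj
    omega

lemma X_strictMono (hc1 : 1 ≤ c) (hcc : c < c') :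
    X l a c < X l a c' := by
  have hsub : (Finset.range l.length).filter (fun i => a < i ∧ l.getD i 0 < c)
      ⊆ (Finset.range l.length).filter (fun i => a < i ∧ l.getD i 0 < c') := by
    intro i hi
    simp only [Finset.mem_filter, Finset.mem_range] at hi ⊢
    omega
  have := Finset.card_le_card hsub
  unfold X
  omega

lemma X_surj (hp : IsPartition l) (ha : a < l.length) (hy : y < B l a)
    (hny : y ∉ Bset l) : ∃ c, 1 ≤ c ∧ c ≤ l.getD a 0 ∧ X l a c = y := by
  classical
  set img := (Finset.Icc 1 (l.getD a 0)).image (X l a) with himg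
  set T := (Finset.range (B l a)) \ Bset l with hT
  have hsub : img ⊆ T := by
    intro z hz
    obtain ⟨c, hc, rfl⟩ := Finset.mem_image.1 hz
    rw [Finset.mem_Icc] at hc
    rw [Finset.mem_sdiff, Finset.mem_range]
    exact ⟨X_lt hp ha hc.1 hc.2, X_not_mem hp ha hc.1 hc.2⟩
  have hcardimg : img.card = l.getD a 0 := by
    rw [himg, Finset.card_image_of_injOn, Nat.card_Icc]
    · omega
    · intro c hc c' hc' hcc
      simp only [Finset.coe_Icc, Set.mem_Icc] at hc hc'
      by_contra hne
      rcases Nat.lt_or_ge c c' with h | h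
      · exact absurd hcc (Nat.ne_of_lt (X_strictMono hc.1 h))
      · exact absurd hcc.symm (Nat.ne_of_lt (X_strictMono hc'.1 (by omega)))
  have hinter : Bset l ∩ Finset.range (B l a) = (Finset.Ico (a+1) l.length).image (B l) := by
    ext z
    simp only [Finset.mem_inter, Finset.mem_range, Finset.mem_image, Finset.mem_Ico, Bset]
    constructor
    · rintro ⟨⟨j, hj, rfl⟩, hlt⟩
      exact ⟨j, ⟨(B_lt_iff hp ha hj).1 hlt, hj⟩, rfl⟩
    · rintro ⟨j, ⟨hja, hj⟩, rfl⟩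
      exact ⟨⟨j, hj, rfl⟩, B_strict hp (by omega) hj⟩
  have hcardinter : (Bset l ∩ Finset.range (B l a)).card = l.length - 1 - a := by
    rw [hinter, Finset.card_image_of_injOn, Nat.card_Ico]
    · omega
    · intro j hj j' hj' hjj
      simp only [Finset.coe_Ico, Set.mem_Ico] at hj hj'
      by_contra hne
      rcases Nat.lt_or_ge j j' with h | h
      · exact absurd hjj.symm (Nat.ne_of_lt (B_strict hp h hj'.2))
      · exact absurd hjj (Nat.ne_of_lt (B_strict hp (by omega) hj.2))
  have hBa : B l a = l.getD a 0 + (l.length - 1 - a) := rfl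
  have hcardT : T.card = l.getD a 0 := by
    have hTeq : T = Finset.range (B l a) \ (Bset l ∩ Finset.range (B l a)) := by
      ext z
      simp only [hT, Finset.mem_sdiff, Finset.mem_inter, Finset.mem_range]
      tauto
    rw [hTeq, Finset.card_sdiff_of_subset Finset.inter_subset_right, Finset.card_range, hcardinter]
    omega
  have heq : img = T := Finset.eq_of_subset_of_card_le hsub (by omega)
  have hyT : y ∈ T := Finset.mem_sdiff.2 ⟨Finset.mem_range.2 hy, hny⟩
  rw [← heq] at hyT
  obtain ⟨c, hc, hXc⟩ := Finset.mem_image.1 hyT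
  rw [Finset.mem_Icc] at hc
  exact ⟨c, hc.1, hc.2, hXc⟩


lemma core_iff (hl : 0 < ℓ) (hp : IsPartition l) :
    IsCore ℓ l ↔ ∀ y ∈ Bset l, ℓ ≤ y → y - ℓ ∈ Bset l := by
  constructor
  · intro hc y hy hly
    obtain ⟨a, ha, rfl⟩ := Finset.mem_image.1 hy
    rw [Finset.mem_range] at ha
    by_contra hn
    obtain ⟨c, hc1, hc2, hXc⟩ := X_surj hp ha (by omega) hn
    have hh := hook_add_X hp ha hc1 hc2
    exact hc a ha c hc1 hc2 ⟨1, by omega⟩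
  · rintro hcl a ha c hc1 hc2 ⟨m, hm⟩
    have hh := hook_add_X hp ha hc1 hc2
    have hX := X_not_mem hp ha hc1 hc2
    have hpos := hook_pos (l := l) (a := a) (c := c)
    have hm1 : 1 ≤ m := by
      rcases Nat.eq_zero_or_pos m with rfl | h
      · omega
      · exact h
    have key : ∀ j, j ≤ m → X l a c + ℓ * (m - j) ∈ Bset l := by
      intro j
      induction j with
      | zero =>
        intro _
        have he : X l a c + ℓ * (m - 0) = B l a := by
          simp only [Nat.sub_zero]; omega
        rw [he]; exact mem_Bset ha
      | succ j ih =>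
        intro hjm
        have h1 := ih (by omega)
        have hk : 1 ≤ m - j := by omega
        have hlk : ℓ ≤ ℓ * (m - j) := by
          calc ℓ = ℓ * 1 := by ring
          _ ≤ ℓ * (m - j) := Nat.mul_le_mul_left ℓ hk
        have h2 := hcl _ h1 (by omega)
        have he : X l a c + ℓ * (m - j) - ℓ = X l a c + ℓ * (m - (j+1)) := by
          have h3 : m - j = (m - (j+1)) + 1 := by omega
          rw [h3, Nat.mul_add]
          omega
        rwa [he] at h2
    have hfin := key m le_rfl
    simp only [Nat.sub_self, Nat.mul_zero, Nat.add_zero] at hfin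
    exact hX hfin

lemma res_iff {l : List ℕ} (hne : l ≠ []) (ha : a < l.length) :
    (((l.getD a 0 : ℤ) - (a + 1)) % ℓ = bottomRes ℓ l) ↔
      B l a % ℓ = B l (l.length - 1) % ℓ := by
  have hn : 1 ≤ l.length := List.length_pos_iff.2 hne
  have hBa : B l a = l.getD a 0 + (l.length - 1 - a) := rfl
  have hBn : B l (l.length - 1) = l.getD (l.length - 1) 0 + (l.length - 1 - (l.length - 1)) := rfl
  have e1 : (B l a : ℤ) = ((l.getD a 0 : ℤ) - (a + 1)) + l.length := by omega
  have e2 : (B l (l.length - 1) : ℤ) =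
      ((l.getD (l.length - 1) 0 : ℤ) - l.length) + l.length := by omega
  unfold bottomRes
  constructor
  · intro h
    have h2 : (B l a : ℤ) % ℓ = (B l (l.length - 1) : ℤ) % ℓ := by
      rw [e1, e2]; exact Int.ModEq.add_right _ h
    rw [← Int.natCast_mod, ← Int.natCast_mod] at h2
    exact_mod_cast h2
  · intro h
    have h2 : (B l a : ℤ) % ℓ = (B l (l.length - 1) : ℤ) % ℓ := by
      rw [← Int.natCast_mod, ← Int.natCast_mod]; exact_mod_cast h
    rw [e1, e2] at h2
    exact Int.ModEq.add_right_cancel' _ h2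

lemma mod_mem {S : Finset ℕ} (hl : 0 < ℓ) (hcl : ∀ y ∈ S, ℓ ≤ y → y - ℓ ∈ S) :
    ∀ y ∈ S, y % ℓ ∈ S := by
  intro y
  induction y using Nat.strong_induction_on with
  | _ y ih =>
    intro hy
    by_cases h : ℓ ≤ y
    · have h1 := hcl y hy h
      have h2 := ih (y - ℓ) (by omega) h1
      rwa [← Nat.mod_eq_sub_mod h] at h2
    · rwa [Nat.mod_eq_of_lt (by omega)]

lemma sub_one_mod (hl : 0 < ℓ) (hy : 1 ≤ y % ℓ) : (y - 1) % ℓ = y % ℓ - 1 := by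
  have hd := Nat.div_add_mod y ℓ
  have hlt := Nat.mod_lt y hl
  have h1 : y - 1 = (y % ℓ - 1) + ℓ * (y / ℓ) := by omega
  rw [h1, Nat.add_mul_mod_self_left, Nat.mod_eq_of_lt (by omega)]

def f (ℓ : ℕ) (l : List ℕ) (a : ℕ) : ℕ :=
  if B l a % ℓ = B l (l.length - 1) % ℓ then l.getD a 0 - 1 else l.getD a 0

lemma nn_ex (ℓ : ℕ) (l : List ℕ) : ∃ a, a = l.length ∨ (a < l.length ∧ f ℓ l a = 0) :=
  ⟨l.length, Or.inl rfl⟩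

def nn (ℓ : ℕ) (l : List ℕ) : ℕ := Nat.find (nn_ex ℓ l)

def mu (ℓ : ℕ) (l : List ℕ) : List ℕ := (List.range (nn ℓ l)).map (f ℓ l)

section main
variable {ℓ : ℕ} {l : List ℕ}

lemma r_pos (hp : IsPartition l) (hne : l ≠ []) : 0 < B l (l.length - 1) := by
  have hn : 1 ≤ l.length := List.length_pos_iff.2 hne
  have := pos_of_lt hp (a := l.length - 1) (by omega)
  have hB : B l (l.length - 1) = l.getD (l.length - 1) 0 + (l.length - 1 - (l.length - 1)) := rfl
  omega

lemma r_min (hp : IsPartition l) (hne : l ≠ []) :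
    ∀ y ∈ Bset l, B l (l.length - 1) ≤ y := by
  intro y hy
  obtain ⟨j, hj, rfl⟩ := Finset.mem_image.1 hy
  rw [Finset.mem_range] at hj
  rcases eq_or_lt_of_le (by omega : j ≤ l.length - 1) with rfl | h
  · rfl
  · exact le_of_lt (B_strict hp h (by omega))

lemma r_lt (hℓ : 2 ≤ ℓ) (hp : IsPartition l) (hc : IsCore ℓ l) (hne : l ≠ []) :
    B l (l.length - 1) < ℓ ∧ B l (l.length - 1) % ℓ = B l (l.length - 1) := by
  have hn : 1 ≤ l.length := List.length_pos_iff.2 hne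
  have hcl := (core_iff (by omega) hp).1 hc
  have h1 := mod_mem (by omega) hcl _ (mem_Bset (a := l.length - 1) (by omega))
  have h2 := r_min hp hne _ h1
  have h3 : B l (l.length - 1) % ℓ ≤ B l (l.length - 1) := Nat.mod_le _ _
  have h4 : B l (l.length - 1) % ℓ < ℓ := Nat.mod_lt _ (by omega)
  omega

lemma gap (hℓ : 2 ≤ ℓ) (hp : IsPartition l) (hc : IsCore ℓ l) (hne : l ≠ []) :
    ∀ y ∈ Bset l, y % ℓ = B l (l.length - 1) % ℓ → y - 1 ∉ Bset l := by
  intro y hy hmod hmem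
  have hr := r_lt hℓ hp hc hne
  have hrp := r_pos hp hne
  have hcl := (core_iff (by omega : 0 < ℓ) hp).1 hc
  have h1 := mod_mem (by omega : 0 < ℓ) hcl _ hmem
  have h2 := r_min hp hne _ h1
  have h3 : (y - 1) % ℓ = y % ℓ - 1 := sub_one_mod (by omega) (by omega)
  omega

lemma part1 (hℓ : 2 ≤ ℓ) (hp : IsPartition l) (hc : IsCore ℓ l) (hne : l ≠ [])
    (ha : a < l.length) (hcond : B l a % ℓ = B l (l.length - 1) % ℓ) :
    l.getD (a + 1) 0 < l.getD a 0 := by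
  have hn : 1 ≤ l.length := List.length_pos_iff.2 hne
  have hpos := pos_of_lt hp ha
  rcases eq_or_lt_of_le (by omega : a + 1 ≤ l.length) with heq | hlt
  · rw [List.getD_eq_default _ _ (by omega)]
    omega
  · have hgap := gap hℓ hp hc hne _ (mem_Bset ha) hcond
    have hmem : B l (a + 1) ∈ Bset l := mem_Bset hlt
    have hBlt : B l (a + 1) < B l a := B_strict hp (by omega) hlt
    have hne2 : B l (a + 1) ≠ B l a - 1 := fun h => hgap (h ▸ hmem)
    have hBa : B l a = l.getD a 0 + (l.length - 1 - a) := rfl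
    have hBa1 : B l (a + 1) = l.getD (a + 1) 0 + (l.length - 1 - (a + 1)) := rfl
    omega

lemma f_le (a : ℕ) : f ℓ l a ≤ l.getD a 0 := by
  unfold f; split <;> omega

lemma f_step (hℓ : 2 ≤ ℓ) (hp : IsPartition l) (hc : IsCore ℓ l) (hne : l ≠ [])
    (ha : a + 1 < l.length) : f ℓ l (a + 1) ≤ f ℓ l a := by
  have h1 := anti hp (by omega : a ≤ a + 1) ha
  have h2 := f_le (ℓ := ℓ) (l := l) (a + 1)
  unfold f
  by_cases hca : B l a % ℓ = B l (l.length - 1) % ℓ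
  · have h3 := part1 hℓ hp hc hne (by omega : a < l.length) hca
    rw [if_pos hca]
    split <;> omega
  · rw [if_neg hca]
    split <;> omega

lemma f_anti (hℓ : 2 ≤ ℓ) (hp : IsPartition l) (hc : IsCore ℓ l) (hne : l ≠ [])
    (hab : a ≤ b) (hb : b < l.length) : f ℓ l b ≤ f ℓ l a := by
  obtain ⟨d, rfl⟩ := Nat.exists_eq_add_of_le hab
  clear hab
  induction d with
  | zero => rfl
  | succ d ih =>
    have h1 : a + d + 1 = a + (d + 1) := by omega
    calc f ℓ l (a + (d + 1)) = f ℓ l ((a + d) + 1) := by rw [h1]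
    _ ≤ f ℓ l (a + d) := f_step hℓ hp hc hne (by omega)
    _ ≤ f ℓ l a := ih (by omega)

lemma nn_le : nn ℓ l ≤ l.length :=
  Nat.find_le (Or.inl rfl)

lemma f_pos_of_lt_nn (ha : a < nn ℓ l) : a < l.length ∧ 0 < f ℓ l a := by
  have h := Nat.find_min (nn_ex ℓ l) ha
  have h2 : a < l.length := by
    have := nn_le (ℓ := ℓ) (l := l); omega
  push_neg at h
  exact ⟨h2, by have := (h.2 h2); omega⟩

lemma f_zero_of_ge (hℓ : 2 ≤ ℓ) (hp : IsPartition l) (hc : IsCore ℓ l) (hne : l ≠ [])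
    (ha : nn ℓ l ≤ a) (ha2 : a < l.length) : f ℓ l a = 0 := by
  have h := Nat.find_spec (nn_ex ℓ l)
  rcases h with h | h
  · change nn ℓ l = l.length at h
    omega
  · have h3 : f ℓ l (nn ℓ l) = 0 := h.2
    have := f_anti hℓ hp hc hne ha ha2
    omega

lemma mu_length : (mu ℓ l).length = nn ℓ l := by simp [mu]

lemma mu_getD (ha : a < nn ℓ l) : (mu ℓ l).getD a 0 = f ℓ l a := by
  rw [mu, List.getD_eq_getElem _ _ (by simpa using ha)]
  simp

lemma mu_partition (hℓ : 2 ≤ ℓ) (hp : IsPartition l) (hc : IsCore ℓ l) (hne : l ≠ []) :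
    IsPartition (mu ℓ l) := by
  constructor
  · rw [mu]
    apply List.pairwise_iff_get.2
    intro i j hij
    simp only [List.get_eq_getElem, List.getElem_map, List.getElem_range]
    have hj : (j : ℕ) < nn ℓ l := by
      have := j.isLt; simpa using this
    exact f_anti hℓ hp hc hne (le_of_lt hij) (lt_of_lt_of_le hj nn_le)
  · intro x hx
    rw [mu, List.mem_map] at hx
    obtain ⟨a, ha, rfl⟩ := hx
    rw [List.mem_range] at ha
    exact (f_pos_of_lt_nn ha).2

lemma removeRes_eq (hℓ : 2 ≤ ℓ) (hp : IsPartition l) (hc : IsCore ℓ l) (hne : l ≠ []) :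
    removeRes ℓ l = mu ℓ l := by
  unfold removeRes
  have h1 : (List.range l.length).map (fun a =>
      if ((l.getD a 0 : ℤ) - (a + 1)) % ℓ = bottomRes ℓ l
      then l.getD a 0 - 1 else l.getD a 0) = (List.range l.length).map (f ℓ l) := by
    apply List.map_congr_left
    intro a ha
    rw [List.mem_range] at ha
    unfold f
    exact if_congr (res_iff hne ha) rfl rfl
  rw [h1]
  have hnle : nn ℓ l ≤ l.length := nn_le
  have h2 : l.length = nn ℓ l + (l.length - nn ℓ l) := by omega
  rw [h2, List.range_add, List.map_append, List.filter_append]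
  have h3 : ((List.range (nn ℓ l)).map (f ℓ l)).filter (fun x => decide (0 < x))
      = (List.range (nn ℓ l)).map (f ℓ l) := by
    apply List.filter_eq_self.2
    intro x hx
    rw [List.mem_map] at hx
    obtain ⟨a, ha, rfl⟩ := hx
    rw [List.mem_range] at ha
    exact decide_eq_true (f_pos_of_lt_nn ha).2
  have h4 : (((List.range (l.length - nn ℓ l)).map (fun x => nn ℓ l + x)).map
      (f ℓ l)).filter (fun x => decide (0 < x)) = [] := by
    apply List.filter_eq_nil_iff.2
    intro x hx
    rw [List.map_map, List.mem_map] at hx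
    obtain ⟨a, ha, rfl⟩ := hx
    rw [List.mem_range] at ha
    simp only [Function.comp_apply]
    simp [f_zero_of_ge hℓ hp hc hne (by omega : nn ℓ l ≤ nn ℓ l + a) (by omega)]
  rw [h3, h4, List.append_nil, mu]

lemma B_mu (hp : IsPartition l) (ha : a < nn ℓ l) :
    B (mu ℓ l) a + (l.length - nn ℓ l)
      + (if B l a % ℓ = B l (l.length - 1) % ℓ then 1 else 0) = B l a := by
  have h1 : B (mu ℓ l) a = (mu ℓ l).getD a 0 + ((mu ℓ l).length - 1 - a) := rfl
  rw [mu_getD ha, mu_length] at h1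
  have hBa : B l a = l.getD a 0 + (l.length - 1 - a) := rfl
  have hpos := (f_pos_of_lt_nn ha).2
  have halen := (f_pos_of_lt_nn ha).1
  have hlpos := pos_of_lt hp halen
  have hnle : nn ℓ l ≤ l.length := nn_le
  unfold f at h1 hpos
  split at h1 <;> [skip; skip] <;> split <;> omega

/-- forward membership: the moved-bead value of a surviving row. -/
lemma gB_eq (hp : IsPartition l) (ha : a < nn ℓ l) :
    (if B l a % ℓ = B l (l.length - 1) % ℓ then B l a - 1 else B l a)
      = B (mu ℓ l) a + (l.length - nn ℓ l) := by
  have h := B_mu hp ha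
  split at h <;> split <;> omega

/-- dropped rows have λ_a = 1 and satisfy the residue condition. -/
lemma dropped (hℓ : 2 ≤ ℓ) (hp : IsPartition l) (hc : IsCore ℓ l) (hne : l ≠ [])
    (ha : nn ℓ l ≤ a) (ha2 : a < l.length) :
    l.getD a 0 = 1 ∧ B l a % ℓ = B l (l.length - 1) % ℓ := by
  have h := f_zero_of_ge hℓ hp hc hne ha ha2
  have hlpos := pos_of_lt hp ha2
  unfold f at h
  split at h
  · exact ⟨by omega, by assumption⟩
  · omega

lemma gB_dropped (hℓ : 2 ≤ ℓ) (hp : IsPartition l) (hc : IsCore ℓ l) (hne : l ≠ [])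
    (ha : nn ℓ l ≤ a) (ha2 : a < l.length) :
    (if B l a % ℓ = B l (l.length - 1) % ℓ then B l a - 1 else B l a)
      < l.length - nn ℓ l := by
  obtain ⟨h1, h2⟩ := dropped hℓ hp hc hne ha ha2
  rw [if_pos h2]
  have hBa : B l a = l.getD a 0 + (l.length - 1 - a) := rfl
  omega

/-- closure of the moved beta-set under subtracting ℓ. -/
lemma moved_closed (hℓ : 2 ≤ ℓ) (hp : IsPartition l) (hc : IsCore ℓ l) (hne : l ≠ [])
    (hj : j < l.length)
    (hly : ℓ ≤ (if B l j % ℓ = B l (l.length - 1) % ℓ then B l j - 1 else B l j)) :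
    ∃ j' < l.length,
      (if B l j' % ℓ = B l (l.length - 1) % ℓ then B l j' - 1 else B l j')
        = (if B l j % ℓ = B l (l.length - 1) % ℓ then B l j - 1 else B l j) - ℓ := by
  have hcl := (core_iff (by omega : 0 < ℓ) hp).1 hc
  by_cases hcase : B l j % ℓ = B l (l.length - 1) % ℓ
  · rw [if_pos hcase] at hly ⊢
    have hsub : B l j - ℓ ∈ Bset l := hcl _ (mem_Bset hj) (by omega)
    obtain ⟨j', hj', hBj'⟩ := Finset.mem_image.1 hsub
    rw [Finset.mem_range] at hj'
    have hmod : B l j' % ℓ = B l j % ℓ := by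
      rw [hBj', ← Nat.mod_eq_sub_mod (by omega)]
    refine ⟨j', hj', ?_⟩
    rw [if_pos (by omega : B l j' % ℓ = B l (l.length - 1) % ℓ)]
    omega
  · rw [if_neg hcase] at hly ⊢
    have hsub : B l j - ℓ ∈ Bset l := hcl _ (mem_Bset hj) hly
    obtain ⟨j', hj', hBj'⟩ := Finset.mem_image.1 hsub
    rw [Finset.mem_range] at hj'
    have hmod : B l j' % ℓ = B l j % ℓ := by
      rw [hBj', ← Nat.mod_eq_sub_mod (by omega)]
    refine ⟨j', hj', ?_⟩
    rw [if_neg (by omega : ¬ B l j' % ℓ = B l (l.length - 1) % ℓ)]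
    omega

lemma mu_core (hℓ : 2 ≤ ℓ) (hp : IsPartition l) (hc : IsCore ℓ l) (hne : l ≠ []) :
    IsCore ℓ (mu ℓ l) := by
  have hmup := mu_partition hℓ hp hc hne
  rw [core_iff (by omega : 0 < ℓ) hmup]
  intro y hy hly
  obtain ⟨a, ha, rfl⟩ := Finset.mem_image.1 hy
  rw [Finset.mem_range, mu_length] at ha
  have hnle : nn ℓ l ≤ l.length := nn_le
  set k := l.length - nn ℓ l with hk
  have hfwd := gB_eq hp ha
  have hstep := moved_closed hℓ hp hc hne (by omega : a < l.length)
    (by rw [hfwd]; omega)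
  obtain ⟨j', hj', hBj'⟩ := hstep
  rw [hfwd] at hBj'
  -- j' must be a surviving row
  have hj'nn : j' < nn ℓ l := by
    by_contra hcon
    have := gB_dropped hℓ hp hc hne (by omega) hj'
    omega
  have hfwd' := gB_eq hp hj'nn
  rw [hfwd'] at hBj'
  have : B (mu ℓ l) j' = B (mu ℓ l) a - ℓ := by omega
  rw [← this]
  exact Finset.mem_image.2 ⟨j', Finset.mem_range.2 (by rw [mu_length]; omega), rfl⟩

lemma sum_range_list (n : ℕ) (g : ℕ → ℕ) :
    ((List.range n).map g).sum = (Finset.range n).sum g := rfl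

lemma filter_len_card (n : ℕ) (p : ℕ → Prop) [DecidablePred p] :
    ((List.range n).filter (fun i => decide (p i))).length = ((Finset.range n).filter p).card := rfl

lemma list_sum (l : List ℕ) : l.sum = (Finset.range l.length).sum (fun a => l.getD a 0) := by
  rw [← sum_range_list]
  congr 1
  apply List.ext_getElem
  · simp
  · intro i h1 h2
    simp only [List.getElem_map, List.getElem_range]
    rw [List.getD_eq_getElem _ _ (by simpa using h2)]

lemma sum_eq (hℓ : 2 ≤ ℓ) (hp : IsPartition l) (hc : IsCore ℓ l) (hne : l ≠ []) :
    (mu ℓ l).sum + ((Finset.range l.length).filter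
      (fun a => B l a % ℓ = B l (l.length - 1) % ℓ)).card = l.sum := by
  have hnle : nn ℓ l ≤ l.length := nn_le
  rw [mu, sum_range_list, list_sum l, Finset.card_filter]
  have h1 : (Finset.range (nn ℓ l)).sum (f ℓ l) = (Finset.range l.length).sum (f ℓ l) := by
    apply Finset.sum_subset (Finset.range_subset_range.2 hnle)
    intro a ha hna
    rw [Finset.mem_range] at ha
    rw [Finset.mem_range] at hna
    exact f_zero_of_ge hℓ hp hc hne (by omega) ha
  rw [h1, ← Finset.sum_add_distrib]
  apply Finset.sum_congr rfl
  intro a ha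
  rw [Finset.mem_range] at ha
  have hlpos := pos_of_lt hp ha
  unfold f
  split <;> omega

end main

end S19


/-- Each end-of-row box with the bottom-row residue is removable, and removing all
of them yields an ℓ-core μ with |μ| = |λ| minus the number of rows a with
λ_a - a ≡ λ_m - m (mod ℓ). -/
theorem stmt19 (ℓ : ℕ) (hℓ : 2 ≤ ℓ) (l : List ℕ)
    (hp : IsPartition l) (hc : IsCore ℓ l) (hne : l ≠ []) :
    (∀ a < l.length, ((l.getD a 0 : ℤ) - (a + 1)) % ℓ = bottomRes ℓ l →
        l.getD (a + 1) 0 < l.getD a 0) ∧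
    IsPartition (removeRes ℓ l) ∧ IsCore ℓ (removeRes ℓ l) ∧
    (removeRes ℓ l).sum +
      ((List.range l.length).filter
        (fun a => decide (((l.getD a 0 : ℤ) - (a + 1)) % ℓ = bottomRes ℓ l))).length
      = l.sum := by
  refine ⟨?_, ?_, ?_, ?_⟩
  · intro a ha hres
    exact S19.part1 hℓ hp hc hne ha ((S19.res_iff hne ha).1 hres)
  · rw [S19.removeRes_eq hℓ hp hc hne]
    exact S19.mu_partition hℓ hp hc hne
  · rw [S19.removeRes_eq hℓ hp hc hne]
    exact S19.mu_core hℓ hp hc hne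
  · rw [S19.removeRes_eq hℓ hp hc hne]
    have hfilt : ((List.range l.length).filter
        (fun a => decide (((l.getD a 0 : ℤ) - (a + 1)) % ℓ = bottomRes ℓ l))).length
        = ((Finset.range l.length).filter
          (fun a => S19.B l a % ℓ = S19.B l (l.length - 1) % ℓ)).card := by
      rw [← S19.filter_len_card]
      congr 1
      apply List.filter_congr
      intro a ha
      rw [List.mem_range] at ha
      exact decide_eq_decide.2 (S19.res_iff hne ha)
    rw [hfilt]
    exact S19.sum_eq hℓ hp hc hne
end
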